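/- arXiv:1610.03195 — 6 statements merged into one kernel-verified Lean document; each statement's English description precedes it below -/
import Mathlib

section
/- Under the hypotheses of the augmented Hodge decomposition, the kinetic energy does not increase: if ρU* = ρU + ∇p in Ω, m v* = m v − ∫_Γ p n dS, 𝕀 ω* = 𝕀 ω − ∫_Γ p J dS, where U is divergence-free with U·n = v·n + ω·J on Γ and U·n = 0 on Γ', then E* := ∫_Ω ½ρ|U*|² dx + ½m|v*|² + ½ω*·𝕀ω* ≥ ∫_Ω ½ρ|U|² dx + ½m|v|² + ½ω·𝕀ω =: E. -/
open MeasureTheory Matrix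

/-- Cross product of vectors in `ℝ³`. -/
def cross3 (u v : Fin 3 → ℝ) : Fin 3 → ℝ :=
  ![u 1 * v 2 - u 2 * v 1, u 2 * v 0 - u 0 * v 2, u 0 * v 1 - u 1 * v 0]

/-- Gradient of a scalar field on `ℝ³`. -/
noncomputable def grad3 (p : (Fin 3 → ℝ) → ℝ) (x : Fin 3 → ℝ) : Fin 3 → ℝ :=
  fun i => fderiv ℝ p x (Pi.single i 1)

/-! Write `a = ∫_Γ p n dS` and `b = ∫_Γ p J dS`. For a positive semidefinite `A` and
`A y = A x + g` one has `y·Ay ≥ x·Ax + 2 x·g`, since the difference is `δ·Aδ` with `δ = y − x`.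
Applied pointwise to `ρU* = ρU + ∇p`, and to `m v* = m v − a`, `𝕀ω* = 𝕀ω − b`, this bounds
`E*` below by `E + ∫_Ω U·∇p − v·a − ω·b`. Since `∇·(pU) = U·∇p` for divergence-free `U`, the
divergence theorem turns `∫_Ω U·∇p` into the flux `∫_{∂Ω} p U·n dS`, which vanishes on `Γ'` and
equals `v·a + ω·b` on `Γ` by the boundary condition. -/

section

variable {ι : Type*} [Fintype ι]

theorem LinearMap.trace_pi_eq_sum [DecidableEq ι] (f : (ι → ℝ) →ₗ[ℝ] (ι → ℝ)) :
    LinearMap.trace ℝ (ι → ℝ) f = ∑ i, f (Pi.single i 1) i := by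
  rw [LinearMap.trace_eq_matrix_trace ℝ (Pi.basisFun ℝ ι)]
  simp [Matrix.trace]

theorem Matrix.PosSemidef.dotProduct_mulVec_add_two_mul_le {A : Matrix ι ι ℝ}
    (hA : A.PosSemidef) {x y g : ι → ℝ} (h : A *ᵥ y = A *ᵥ x + g) :
    x ⬝ᵥ (A *ᵥ x) + 2 * (x ⬝ᵥ g) ≤ y ⬝ᵥ (A *ᵥ y) := by
  set δ := y - x
  have hδ : A *ᵥ δ = g := by rw [mulVec_sub, h, add_sub_cancel_left]
  have hsymm : δ ⬝ᵥ (A *ᵥ x) = x ⬝ᵥ (A *ᵥ δ) := by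
    rw [dotProduct_mulVec, dotProduct_comm, ← mulVec_transpose,
      ← conjTranspose_eq_transpose_of_trivial, hA.isHermitian.eq]
  have hnonneg : 0 ≤ δ ⬝ᵥ (A *ᵥ δ) := by simpa using hA.dotProduct_mulVec_nonneg δ
  have hy : y = x + δ := by simp [δ]
  have hxδ : x ⬝ᵥ (A *ᵥ δ) = x ⬝ᵥ g := by rw [hδ]
  rw [hy, mulVec_add, dotProduct_add, add_dotProduct, add_dotProduct, hsymm, hxδ]
  linarith

theorem dotProduct_self_add_two_mul_le {a : ℝ} (ha : 0 ≤ a) {x y g : ι → ℝ}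
    (h : a • y = a • x + g) : a * (x ⬝ᵥ x) + 2 * (x ⬝ᵥ g) ≤ a * (y ⬝ᵥ y) := by
  classical
  have hA : (a • (1 : Matrix ι ι ℝ)).PosSemidef := PosSemidef.one.smul ha
  simpa [smul_mulVec, dotProduct_smul] using hA.dotProduct_mulVec_add_two_mul_le (x := x) (y := y)
    (by simpa [smul_mulVec] using h)

end

namespace MeasureTheory

variable {α ι : Type*} [Fintype ι] [MeasurableSpace α] {μ : Measure α} {s : Set α}

-- `s` need not be measurable, which is why both functions must be a.e.-strongly measurable.
theorem ae_restrict_eq_of_eqOn {E : Type*} [TopologicalSpace E] [TopologicalSpace.MetrizableSpace E]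
    {f g : α → E} (hf : AEStronglyMeasurable f (μ.restrict s))
    (hg : AEStronglyMeasurable g (μ.restrict s)) (hfg : Set.EqOn f g s) :
    f =ᵐ[μ.restrict s] g := by
  have hmk : ∀ᵐ x ∂μ.restrict s, hf.mk f x = hg.mk g x := by
    have hmeas : MeasurableSet {x | hf.mk f x ≠ hg.mk g x} :=
      (hf.stronglyMeasurable_mk.measurableSet_eq_fun hg.stronglyMeasurable_mk).compl
    have hnull : μ.restrict s ({x | f x ≠ hf.mk f x} ∪ {x | g x ≠ hg.mk g x}) = 0 :=
      measure_union_null hf.ae_eq_mk hg.ae_eq_mk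
    rw [ae_iff, Measure.restrict_apply (by simpa using hmeas)]
    refine measure_mono_null (t := ({x | f x ≠ hf.mk f x} ∪ {x | g x ≠ hg.mk g x}) ∩ s) ?_
      (nonpos_iff_eq_zero.1 ((Measure.le_restrict_apply _ _).trans hnull.le))
    rintro x ⟨hx, hxs⟩
    refine ⟨?_, hxs⟩
    by_contra! hcon
    simp only [Set.mem_union, Set.mem_ofPred_eq, not_or, not_not] at hcon hx
    exact hx (by rw [← hcon.1, ← hcon.2, hfg hxs])
  filter_upwards [hf.ae_eq_mk, hg.ae_eq_mk, hmk] with x h1 h2 h3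
  rw [h1, h2, h3]

theorem Integrable.const_dotProduct {f : α → ι → ℝ} (hf : Integrable f μ) (v : ι → ℝ) :
    Integrable (fun x => v ⬝ᵥ f x) μ := by
  simp only [dotProduct]
  exact integrable_finsetSum _ fun i _ => (hf.eval i).const_mul _

theorem integral_dotProduct_const {f : α → ι → ℝ} (hf : Integrable f μ) (v : ι → ℝ) :
    ∫ x, v ⬝ᵥ f x ∂μ = v ⬝ᵥ ∫ x, f x ∂μ := by
  simp only [dotProduct]
  rw [integral_finsetSum _ fun i _ => (hf.eval i).const_mul _]
  simp [integral_const_mul, eval_integral hf.eval]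

theorem setIntegral_smul_dotProduct_eq_of_eqOn {p : α → ℝ} {F n J : α → ι → ℝ} {v ω : ι → ℝ}
    (hF : AEStronglyMeasurable F (μ.restrict s)) (hn : IntegrableOn (fun x => p x • n x) s μ)
    (hJ : IntegrableOn (fun x => p x • J x) s μ)
    (hbc : ∀ x ∈ s, F x ⬝ᵥ n x = v ⬝ᵥ n x + ω ⬝ᵥ J x) :
    ∫ x in s, (p x • F x) ⬝ᵥ n x ∂μ
      = v ⬝ᵥ ∫ x in s, p x • n x ∂μ + ω ⬝ᵥ ∫ x in s, p x • J x ∂μ := by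
  have hrigid : Integrable (fun x => v ⬝ᵥ (p x • n x) + ω ⬝ᵥ (p x • J x)) (μ.restrict s) :=
    (hn.const_dotProduct v).add (hJ.const_dotProduct ω)
  have hmeas : AEStronglyMeasurable (fun x => (p x • F x) ⬝ᵥ n x) (μ.restrict s) := by
    simp only [smul_dotProduct, ← dotProduct_smul]
    exact (continuous_fst.dotProduct continuous_snd).comp_aestronglyMeasurable₂ (g := (· ⬝ᵥ ·))
      hF hn.aestronglyMeasurable
  rw [integral_congr_ae (ae_restrict_eq_of_eqOn hmeas hrigid.aestronglyMeasurable fun x hx => ?_),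
    integral_add (hn.const_dotProduct v) (hJ.const_dotProduct ω),
    integral_dotProduct_const hn, integral_dotProduct_const hJ]
  simp only [smul_dotProduct, dotProduct_smul, hbc x hx, smul_eq_mul, mul_add]

end MeasureTheory

theorem trace_fderiv_smul_eq (p : (Fin 3 → ℝ) → ℝ) (U : (Fin 3 → ℝ) → (Fin 3 → ℝ))
    {x : Fin 3 → ℝ} (hp : DifferentiableAt ℝ p x) (hU : DifferentiableAt ℝ U x) :
    LinearMap.trace ℝ (Fin 3 → ℝ)
        (fderiv ℝ (fun y => p y • U y) x : (Fin 3 → ℝ) →ₗ[ℝ] (Fin 3 → ℝ))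
      = U x ⬝ᵥ grad3 p x
        + p x * LinearMap.trace ℝ (Fin 3 → ℝ) (fderiv ℝ U x : (Fin 3 → ℝ) →ₗ[ℝ] (Fin 3 → ℝ)) := by
  rw [fderiv_fun_smul hp hU]
  simp only [LinearMap.trace_pi_eq_sum, ContinuousLinearMap.coe_coe, _root_.add_apply,
    ContinuousLinearMap.smulRight_apply, FunLike.coe_smul, Pi.add_apply, Pi.smul_apply,
    smul_eq_mul, dotProduct, grad3, Finset.mul_sum, ← Finset.sum_add_distrib]
  exact Finset.sum_congr rfl fun i _ => by ring

theorem setIntegral_trace_fderiv_smul_of_divergence_free {Ω : Set (Fin 3 → ℝ)}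
    (hΩ : MeasurableSet Ω) {p : (Fin 3 → ℝ) → ℝ} {U : (Fin 3 → ℝ) → (Fin 3 → ℝ)}
    (hp : Differentiable ℝ p) (hU : Differentiable ℝ U)
    (hdivfree : ∀ x ∈ Ω,
      LinearMap.trace ℝ (Fin 3 → ℝ) (fderiv ℝ U x : (Fin 3 → ℝ) →ₗ[ℝ] (Fin 3 → ℝ)) = 0) :
    ∫ x in Ω, LinearMap.trace ℝ (Fin 3 → ℝ)
        (fderiv ℝ (fun y => p y • U y) x : (Fin 3 → ℝ) →ₗ[ℝ] (Fin 3 → ℝ))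
      = ∫ x in Ω, U x ⬝ᵥ grad3 p x :=
  setIntegral_congr_fun hΩ fun x hx => by
    rw [trace_fderiv_smul_eq p U (hp x) (hU x), hdivfree x hx, mul_zero, add_zero]

theorem augmented_hodge_projection_energy_stable_general
    (Ω : Set (Fin 3 → ℝ)) (hopen : IsOpen Ω)
    (Γ Γ' : Set (Fin 3 → ℝ)) (hbdry : Γ ∪ Γ' = frontier Ω)
    (σ : Measure (Fin 3 → ℝ))
    (n : (Fin 3 → ℝ) → (Fin 3 → ℝ))
    (ρ m : ℝ) (hρ : 0 < ρ) (hm : 0 < m)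
    (𝕀 : Matrix (Fin 3) (Fin 3) ℝ) (h𝕀 : 𝕀.PosDef)
    (c : Fin 3 → ℝ) (v vstar ω ωstar : Fin 3 → ℝ)
    (U Ustar : (Fin 3 → ℝ) → (Fin 3 → ℝ)) (p : (Fin 3 → ℝ) → ℝ)
    (hU : ContDiff ℝ 1 U) (hp : ContDiff ℝ 1 p)
    -- the augmented Hodge decomposition
    (hdecU : ∀ x ∈ Ω, ρ • Ustar x = ρ • U x + grad3 p x)
    (hdecv : m • vstar = m • v - ∫ x in Γ, p x • n x ∂σ)
    (hdecω : 𝕀 *ᵥ ωstar = 𝕀 *ᵥ ω - ∫ x in Γ, p x • cross3 (x - c) (n x) ∂σ)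
    -- incompressibility and non-penetration conditions
    (hdivfree : ∀ x ∈ Ω,
      LinearMap.trace ℝ (Fin 3 → ℝ) (fderiv ℝ U x : (Fin 3 → ℝ) →ₗ[ℝ] (Fin 3 → ℝ)) = 0)
    (hbcΓ : ∀ x ∈ Γ, U x ⬝ᵥ n x = v ⬝ᵥ n x + ω ⬝ᵥ cross3 (x - c) (n x))
    (hbcΓ' : ∀ x ∈ Γ', U x ⬝ᵥ n x = 0)
    -- integrability (U, U* ∈ L²(Ω))
    (hint1 : IntegrableOn (fun x => Ustar x ⬝ᵥ Ustar x) Ω)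
    (hint2 : IntegrableOn (fun x => U x ⬝ᵥ U x) Ω)
    (hint3 : IntegrableOn (fun x => U x ⬝ᵥ grad3 p x) Ω)
    (hint5 : IntegrableOn (fun x => p x • n x) Γ σ)
    (hint6 : IntegrableOn (fun x => p x • cross3 (x - c) (n x)) Γ σ)
    -- divergence theorem on the Lipschitz domain Ω
    (hdiv : ∀ F : (Fin 3 → ℝ) → (Fin 3 → ℝ), ContDiff ℝ 1 F →
      ∫ x in Ω, LinearMap.trace ℝ (Fin 3 → ℝ) (fderiv ℝ F x : (Fin 3 → ℝ) →ₗ[ℝ] (Fin 3 → ℝ))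
        = ∫ x in Γ ∪ Γ', F x ⬝ᵥ n x ∂σ) :
    (∫ x in Ω, (1 / 2) * ρ * (Ustar x ⬝ᵥ Ustar x)) + (1 / 2) * m * (vstar ⬝ᵥ vstar)
        + (1 / 2) * (ωstar ⬝ᵥ (𝕀 *ᵥ ωstar))
      ≥ (∫ x in Ω, (1 / 2) * ρ * (U x ⬝ᵥ U x)) + (1 / 2) * m * (v ⬝ᵥ v)
        + (1 / 2) * (ω ⬝ᵥ (𝕀 *ᵥ ω)) := by
  set a := ∫ x in Γ, p x • n x ∂σ
  set b := ∫ x in Γ, p x • cross3 (x - c) (n x) ∂σ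
  have hflux : ∫ x in Ω, U x ⬝ᵥ grad3 p x = v ⬝ᵥ a + ω ⬝ᵥ b := by
    have hΓΓ' : MeasurableSet (Γ ∪ Γ') := hbdry ▸ isClosed_frontier.measurableSet
    rw [← setIntegral_trace_fderiv_smul_of_divergence_free hopen.measurableSet
        (hp.differentiable one_ne_zero) (hU.differentiable one_ne_zero) hdivfree,
      hdiv (fun y => p y • U y) (hp.smul hU), setIntegral_eq_of_subset_of_forall_sdiff_eq_zero hΓΓ'
        Set.subset_union_left fun x hx => ?_]
    · exact setIntegral_smul_dotProduct_eq_of_eqOn hU.continuous.aestronglyMeasurable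
        hint5 hint6 hbcΓ
    · rw [smul_dotProduct, hbcΓ' x (hx.1.resolve_left hx.2), smul_zero]
  have hfluid : (∫ x in Ω, (1 / 2) * ρ * (U x ⬝ᵥ U x)) + ∫ x in Ω, U x ⬝ᵥ grad3 p x
      ≤ ∫ x in Ω, (1 / 2) * ρ * (Ustar x ⬝ᵥ Ustar x) := by
    rw [← integral_add (hint2.const_mul _) hint3]
    refine setIntegral_mono_on ((hint2.const_mul _).add hint3) (hint1.const_mul _)
      hopen.measurableSet fun x hx => ?_
    linarith [dotProduct_self_add_two_mul_le hρ.le (hdecU x hx)]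
  have htrans := dotProduct_self_add_two_mul_le hm.le (hdecv.trans (sub_eq_add_neg _ _))
  have hrot := h𝕀.posSemidef.dotProduct_mulVec_add_two_mul_le
    (hdecω.trans (sub_eq_add_neg _ _))
  rw [dotProduct_neg] at htrans hrot
  linarith

/-- (Stability of the augmented Hodge projection.) If
`ρU* = ρU + ∇p` in `Ω`, `m v* = m v − ∫_Γ p n dS`, `𝕀 ω* = 𝕀 ω − ∫_Γ p J dS`,
where `U` is divergence free with `U·n = v·n + ω·J` on `Γ` and `U·n = 0` on `Γ'`
(`J(x) = (x−c) × n(x)`), then the kinetic energy does not increase: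
`E* = ∫_Ω ½ρ|U*|² dx + ½m|v*|² + ½ω*·𝕀ω* ≥ ∫_Ω ½ρ|U|² dx + ½m|v|² + ½ω·𝕀ω = E`. -/
theorem augmented_hodge_projection_energy_stable
    (Ω : Set (Fin 3 → ℝ)) (hopen : IsOpen Ω) (hbd : Bornology.IsBounded Ω)
    (Γ Γ' : Set (Fin 3 → ℝ)) (hdisj : Disjoint Γ Γ') (hbdry : Γ ∪ Γ' = frontier Ω)
    (σ : Measure (Fin 3 → ℝ)) (hσfin : σ (Γ ∪ Γ') ≠ ⊤)
    (n : (Fin 3 → ℝ) → (Fin 3 → ℝ)) (hunit : ∀ x ∈ Γ ∪ Γ', ∑ i, n x i ^ 2 = 1)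
    (ρ m : ℝ) (hρ : 0 < ρ) (hm : 0 < m)
    (𝕀 : Matrix (Fin 3) (Fin 3) ℝ) (h𝕀 : 𝕀.PosDef)
    (c : Fin 3 → ℝ) (v vstar ω ωstar : Fin 3 → ℝ)
    (U Ustar : (Fin 3 → ℝ) → (Fin 3 → ℝ)) (p : (Fin 3 → ℝ) → ℝ)
    (hU : ContDiff ℝ 1 U) (hp : ContDiff ℝ 1 p)
    -- the augmented Hodge decomposition
    (hdecU : ∀ x ∈ Ω, ρ • Ustar x = ρ • U x + grad3 p x)
    (hdecv : m • vstar = m • v - ∫ x in Γ, p x • n x ∂σ)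
    (hdecω : 𝕀 *ᵥ ωstar = 𝕀 *ᵥ ω - ∫ x in Γ, p x • cross3 (x - c) (n x) ∂σ)
    -- incompressibility and non-penetration conditions
    (hdivfree : ∀ x ∈ Ω,
      LinearMap.trace ℝ (Fin 3 → ℝ) (fderiv ℝ U x : (Fin 3 → ℝ) →ₗ[ℝ] (Fin 3 → ℝ)) = 0)
    (hbcΓ : ∀ x ∈ Γ, U x ⬝ᵥ n x = v ⬝ᵥ n x + ω ⬝ᵥ cross3 (x - c) (n x))
    (hbcΓ' : ∀ x ∈ Γ', U x ⬝ᵥ n x = 0)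
    -- integrability (U, U* ∈ L²(Ω))
    (hint1 : IntegrableOn (fun x => Ustar x ⬝ᵥ Ustar x) Ω)
    (hint2 : IntegrableOn (fun x => U x ⬝ᵥ U x) Ω)
    (hint3 : IntegrableOn (fun x => U x ⬝ᵥ grad3 p x) Ω)
    (hint4 : IntegrableOn (fun x => grad3 p x ⬝ᵥ grad3 p x) Ω)
    (hint5 : IntegrableOn (fun x => p x • n x) Γ σ)
    (hint6 : IntegrableOn (fun x => p x • cross3 (x - c) (n x)) Γ σ)
    -- divergence theorem on the Lipschitz domain Ω
    (hdiv : ∀ F : (Fin 3 → ℝ) → (Fin 3 → ℝ), ContDiff ℝ 1 F →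
      ∫ x in Ω, LinearMap.trace ℝ (Fin 3 → ℝ) (fderiv ℝ F x : (Fin 3 → ℝ) →ₗ[ℝ] (Fin 3 → ℝ))
        = ∫ x in Γ ∪ Γ', F x ⬝ᵥ n x ∂σ) :
    (∫ x in Ω, (1 / 2) * ρ * (Ustar x ⬝ᵥ Ustar x)) + (1 / 2) * m * (vstar ⬝ᵥ vstar)
        + (1 / 2) * (ωstar ⬝ᵥ (𝕀 *ᵥ ωstar))
      ≥ (∫ x in Ω, (1 / 2) * ρ * (U x ⬝ᵥ U x)) + (1 / 2) * m * (v ⬝ᵥ v)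
        + (1 / 2) * (ω ⬝ᵥ (𝕀 *ᵥ ω)) :=
  augmented_hodge_projection_energy_stable_general Ω hopen Γ Γ' hbdry σ n ρ m hρ hm 𝕀 h𝕀 c v vstar ω
    ωstar U Ustar p hU hp hdecU hdecv hdecω hdivfree hbcΓ hbcΓ' hint1 hint2 hint3 hint5 hint6 hdiv
end

section
/- If the augmented Hodge decomposition exists for every input in H^{k+1}, then it is unique: if ρU = −∇p in Ω, m v = ∫_Γ p n dS, 𝕀ω = ∫_Γ p J dS, with ∇·U = 0 in Ω, U·n = v·n + ω·J on Γ, and U·n = 0 on Γ', then U = 0, v = 0, ω = 0, and p is constant. -/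
/-!
Test the divergence theorem against the field `p U`. Since `ρ U = -∇p` and `∇·U = 0`, its
divergence is `-|∇p|² / ρ`, while the boundary conditions make its flux through `∂Ω` equal to
`v·∫_Γ p n + ω·∫_Γ p J = m |v|² + ω·𝕀ω ≥ 0`. Hence the Dirichlet energy of `p` vanishes, so
`∇p = 0` and `U = 0` in `Ω`, and by continuity on `Γ`. The flux then vanishes, which forces
`v = 0` and `ω = 0`, and `p` is constant on the connected open set `Ω`.
-/

open MeasureTheory Matrix

open Set Filter

section SetIntegral

/- `Γ` and `Γ'` are not assumed measurable, so the library's lemmas splitting set integrals do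
not apply; integrability of the integrand takes the place of measurability of the sets. -/

variable {X E : Type*} [MeasurableSpace X] [NormedAddCommGroup E] {μ : Measure X}
  {s t : Set X} {f g : X → E}

theorem ae_restrict_eq_zero_of_forall_mem (hf : AEStronglyMeasurable f (μ.restrict t))
    (ht : ∀ x ∈ t, f x = 0) : ∀ᵐ x ∂μ.restrict t, f x = 0 := by
  have hmk : ∀ᵐ x ∂μ.restrict t, hf.mk f x = 0 := by
    have hmeas : MeasurableSet {x | hf.mk f x = 0} :=
      hf.stronglyMeasurable_mk.measurableSet_eq_fun stronglyMeasurable_zero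
    rw [ae_restrict_iff hmeas]
    filter_upwards [ae_imp_of_ae_restrict hf.ae_eq_mk] with x hx hxt
    rw [← hx hxt, ht x hxt]
  filter_upwards [hf.ae_eq_mk, hmk] with x hx hx' using hx.trans hx'

theorem setIntegral_union_eq_of_eqOn [NormedSpace ℝ E] (hf : IntegrableOn f (s ∪ t) μ)
    (hg : IntegrableOn g s μ) (hfg : EqOn f g s) (ht : ∀ x ∈ t, f x = 0) :
    ∫ x in s ∪ t, f x ∂μ = ∫ x in s, g x ∂μ := by
  have hft : ∀ᵐ x ∂μ.restrict t, f x = 0 :=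
    ae_restrict_eq_zero_of_forall_mem (hf.mono_set subset_union_right).aestronglyMeasurable ht
  rw [integral_union_eq_left_of_ae hft, ← sub_eq_zero,
    ← integral_sub (hf.mono_set subset_union_left) hg]
  exact setIntegral_eq_zero_of_forall_eq_zero fun x hx => sub_eq_zero.2 (hfg hx)

end SetIntegral

theorem eqOn_zero_of_setIntegral_eq_zero {X : Type*} [TopologicalSpace X] [MeasurableSpace X]
    [OpensMeasurableSpace X] {μ : Measure X} [μ.IsOpenPosMeasure] {Ω : Set X} {f : X → ℝ}
    (hΩ : IsOpen Ω) (hf : ContinuousOn f Ω) (hf_nonneg : ∀ x ∈ Ω, 0 ≤ f x)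
    (hint : IntegrableOn f Ω μ) (h0 : ∫ x in Ω, f x ∂μ = 0) : EqOn f 0 Ω :=
  have hae : f =ᵐ[μ.restrict Ω] 0 :=
    (setIntegral_eq_zero_iff_of_nonneg_ae
      ((ae_restrict_iff' hΩ.measurableSet).2 (Eventually.of_forall hf_nonneg)) hint).1 h0
  μ.eqOn_open_of_ae_eq hae hΩ hf continuousOn_const

section DotProduct

variable {ι : Type*} [Fintype ι]

theorem dotProduct_self_nonneg {R : Type*} [Ring R] [LinearOrder R] [IsStrictOrderedRing R]
    (v : ι → R) : 0 ≤ v ⬝ᵥ v :=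
  Finset.sum_nonneg fun i _ => mul_self_nonneg (v i)

theorem smul_dotProduct_eq_of_dotProduct_eq {a : ℝ} {u n J v ω : ι → ℝ}
    (h : u ⬝ᵥ n = v ⬝ᵥ n + ω ⬝ᵥ J) : (a • u) ⬝ᵥ n = v ⬝ᵥ (a • n) + ω ⬝ᵥ (a • J) := by
  simp only [smul_dotProduct, h, dotProduct_smul, smul_eq_mul, mul_add]

theorem mul_dotProduct_self_add_dotProduct_mulVec_nonneg {m : ℝ} (hm : 0 ≤ m)
    {A : Matrix ι ι ℝ} (hA : A.PosSemidef) (v ω : ι → ℝ) :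
    0 ≤ m * (v ⬝ᵥ v) + ω ⬝ᵥ (A *ᵥ ω) := by
  have hAω : 0 ≤ ω ⬝ᵥ (A *ᵥ ω) := by simpa using hA.dotProduct_mulVec_nonneg ω
  have := dotProduct_self_nonneg v
  positivity

theorem eq_zero_of_mul_dotProduct_self_add_dotProduct_mulVec_eq_zero {m : ℝ} (hm : 0 < m)
    {A : Matrix ι ι ℝ} (hA : A.PosDef) {v ω : ι → ℝ}
    (h : m * (v ⬝ᵥ v) + ω ⬝ᵥ (A *ᵥ ω) = 0) : v = 0 ∧ ω = 0 := by
  have hv := mul_nonneg hm.le (dotProduct_self_nonneg v)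
  have hω : 0 ≤ ω ⬝ᵥ (A *ᵥ ω) := by simpa using hA.posSemidef.dotProduct_mulVec_nonneg ω
  refine ⟨dotProduct_self_eq_zero.1 ?_, ?_⟩
  · exact (mul_eq_zero.1 (by linarith)).resolve_left hm.ne'
  · by_contra hne
    have := hA.dotProduct_mulVec_pos hne
    simp only [star_trivial] at this
    linarith

variable {X : Type*} [MeasurableSpace X] {μ : Measure X} {F : X → ι → ℝ}

theorem MeasureTheory.Integrable.const_dotProduct_s11 (v : ι → ℝ) (hF : Integrable F μ) :
    Integrable (fun x => v ⬝ᵥ F x) μ :=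
  (dotProductBilin ℝ ℝ v).toContinuousLinearMap.integrable_comp hF

theorem dotProduct_integral (v : ι → ℝ) (hF : Integrable F μ) :
    v ⬝ᵥ ∫ x, F x ∂μ = ∫ x, v ⬝ᵥ F x ∂μ :=
  ((dotProductBilin ℝ ℝ v).toContinuousLinearMap.integral_comp_comm hF).symm

end DotProduct

section BoundaryFlux

variable {X ι : Type*} [MeasurableSpace X] [Fintype ι] {σ : Measure X} {Γ Γ' : Set X}
  {n J U : X → ι → ℝ} {p : X → ℝ} {v ω : ι → ℝ} {m : ℝ} {A : Matrix ι ι ℝ}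

theorem integrableOn_dotProduct_smul_add (hpn : IntegrableOn (fun x => p x • n x) Γ σ)
    (hpJ : IntegrableOn (fun x => p x • J x) Γ σ) :
    IntegrableOn (fun x => v ⬝ᵥ (p x • n x) + ω ⬝ᵥ (p x • J x)) Γ σ :=
  (Integrable.const_dotProduct_s11 v hpn).add (Integrable.const_dotProduct_s11 ω hpJ)

theorem setIntegral_dotProduct_smul_add (hv : m • v = ∫ x in Γ, p x • n x ∂σ)
    (hω : A *ᵥ ω = ∫ x in Γ, p x • J x ∂σ) (hpn : IntegrableOn (fun x => p x • n x) Γ σ)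
    (hpJ : IntegrableOn (fun x => p x • J x) Γ σ) :
    ∫ x in Γ, v ⬝ᵥ (p x • n x) + ω ⬝ᵥ (p x • J x) ∂σ = m * (v ⬝ᵥ v) + ω ⬝ᵥ (A *ᵥ ω) := by
  rw [integral_add (Integrable.const_dotProduct_s11 v hpn) (Integrable.const_dotProduct_s11 ω hpJ),
    ← dotProduct_integral v hpn, ← dotProduct_integral ω hpJ, ← hv, ← hω, dotProduct_smul,
    smul_eq_mul]

theorem setIntegral_smul_dotProduct_nonneg (hm : 0 ≤ m) (hA : A.PosSemidef)
    (hv : m • v = ∫ x in Γ, p x • n x ∂σ) (hω : A *ᵥ ω = ∫ x in Γ, p x • J x ∂σ)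
    (hpn : IntegrableOn (fun x => p x • n x) Γ σ) (hpJ : IntegrableOn (fun x => p x • J x) Γ σ)
    (hbc : ∀ x ∈ Γ, U x ⬝ᵥ n x = v ⬝ᵥ n x + ω ⬝ᵥ J x) (hbc' : ∀ x ∈ Γ', U x ⬝ᵥ n x = 0) :
    0 ≤ ∫ x in Γ ∪ Γ', (p x • U x) ⬝ᵥ n x ∂σ := by
  by_cases hint : IntegrableOn (fun x => (p x • U x) ⬝ᵥ n x) (Γ ∪ Γ') σ
  · rw [setIntegral_union_eq_of_eqOn hint (integrableOn_dotProduct_smul_add hpn hpJ)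
      (fun x hx => smul_dotProduct_eq_of_dotProduct_eq (hbc x hx))
      (fun x hx => by rw [smul_dotProduct, hbc' x hx, smul_zero]),
      setIntegral_dotProduct_smul_add hv hω hpn hpJ]
    exact mul_dotProduct_self_add_dotProduct_mulVec_nonneg hm hA v ω
  · rw [integral_undef hint]

theorem rigid_velocities_eq_zero_of_forall_mem_eq_zero (hm : 0 < m) (hA : A.PosDef)
    (hv : m • v = ∫ x in Γ, p x • n x ∂σ) (hω : A *ᵥ ω = ∫ x in Γ, p x • J x ∂σ)
    (hpn : IntegrableOn (fun x => p x • n x) Γ σ) (hpJ : IntegrableOn (fun x => p x • J x) Γ σ)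
    (hbc : ∀ x ∈ Γ, U x ⬝ᵥ n x = v ⬝ᵥ n x + ω ⬝ᵥ J x) (hU : ∀ x ∈ Γ, U x = 0) :
    v = 0 ∧ ω = 0 := by
  refine eq_zero_of_mul_dotProduct_self_add_dotProduct_mulVec_eq_zero hm hA ?_
  rw [← setIntegral_dotProduct_smul_add hv hω hpn hpJ]
  refine setIntegral_eq_zero_of_forall_eq_zero fun x hx => ?_
  rw [← smul_dotProduct_eq_of_dotProduct_eq (hbc x hx), hU x hx, smul_zero, zero_dotProduct]

end BoundaryFlux

section Divergence

variable {E : Type*} [NormedAddCommGroup E] [NormedSpace ℝ E] [FiniteDimensional ℝ E]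

noncomputable def divergence (F : E → E) (x : E) : ℝ :=
  LinearMap.trace ℝ E (fderiv ℝ F x : E →ₗ[ℝ] E)

theorem divergence_smul {p : E → ℝ} {U : E → E} {x : E} (hp : DifferentiableAt ℝ p x)
    (hU : DifferentiableAt ℝ U x) :
    divergence (fun y => p y • U y) x = p x * divergence U x + fderiv ℝ p x (U x) := by
  simp [divergence, fderiv_fun_smul hp hU]

end Divergence

section Gradient

variable {p : (Fin 3 → ℝ) → ℝ}

theorem grad3_dotProduct (x w : Fin 3 → ℝ) :
    grad3 p x ⬝ᵥ w = fderiv ℝ p x w := by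
  conv_rhs => rw [pi_eq_sum_univ' w]
  simp only [grad3, dotProduct, map_sum, map_smul, smul_eq_mul, mul_comm]

theorem fderiv_eq_zero_of_grad3_eq_zero {x : Fin 3 → ℝ} (h : grad3 p x = 0) :
    fderiv ℝ p x = 0 :=
  ContinuousLinearMap.ext fun w => by rw [← grad3_dotProduct, h, zero_dotProduct]; rfl

theorem continuous_grad3 (hp : ContDiff ℝ 1 p) : Continuous (grad3 p) :=
  continuous_pi fun _ => (hp.continuous_fderiv one_ne_zero).clm_apply continuous_const

theorem mul_divergence_smul_eq_neg_grad3_dotProduct {U : (Fin 3 → ℝ) → Fin 3 → ℝ}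
    {x : Fin 3 → ℝ} {ρ : ℝ} (hp : DifferentiableAt ℝ p x) (hU : DifferentiableAt ℝ U x)
    (hdivU : divergence U x = 0) (hUp : ρ • U x = -grad3 p x) :
    ρ * divergence (fun y => p y • U y) x = -(grad3 p x ⬝ᵥ grad3 p x) := by
  rw [divergence_smul hp hU, hdivU, mul_zero, zero_add, ← grad3_dotProduct, ← smul_eq_mul,
    ← dotProduct_smul, hUp, dotProduct_neg]

end Gradient

theorem augmented_hodge_decomposition_unique_general
    (Ω : Set (Fin 3 → ℝ)) (hopen : IsOpen Ω) (hconn : IsConnected Ω)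
    (Γ Γ' : Set (Fin 3 → ℝ)) (hbdry : Γ ∪ Γ' = frontier Ω)
    (σ : Measure (Fin 3 → ℝ))
    (n : (Fin 3 → ℝ) → (Fin 3 → ℝ))
    (ρ m : ℝ) (hρ : 0 < ρ) (hm : 0 < m)
    (𝕀 : Matrix (Fin 3) (Fin 3) ℝ) (h𝕀 : 𝕀.PosDef)
    (c : Fin 3 → ℝ) (v ω : Fin 3 → ℝ)
    (U : (Fin 3 → ℝ) → (Fin 3 → ℝ)) (p : (Fin 3 → ℝ) → ℝ)
    (hU : ContDiff ℝ 1 U) (hp : ContDiff ℝ 2 p)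
    -- the relations of the trivial decomposition
    (hU_eq : ∀ x ∈ Ω, ρ • U x = -grad3 p x)
    (hv_eq : m • v = ∫ x in Γ, p x • n x ∂σ)
    (hω_eq : 𝕀 *ᵥ ω = ∫ x in Γ, p x • cross3 (x - c) (n x) ∂σ)
    -- incompressibility and non-penetration conditions
    (hdivfree : ∀ x ∈ Ω,
      LinearMap.trace ℝ (Fin 3 → ℝ) (fderiv ℝ U x : (Fin 3 → ℝ) →ₗ[ℝ] (Fin 3 → ℝ)) = 0)
    (hbcΓ : ∀ x ∈ Γ, U x ⬝ᵥ n x = v ⬝ᵥ n x + ω ⬝ᵥ cross3 (x - c) (n x))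
    (hbcΓ' : ∀ x ∈ Γ', U x ⬝ᵥ n x = 0)
    -- integrability and the divergence theorem on the domain Ω
    (hint1 : IntegrableOn (fun x => grad3 p x ⬝ᵥ grad3 p x) Ω)
    (hint2 : IntegrableOn (fun x => p x • n x) Γ σ)
    (hint3 : IntegrableOn (fun x => p x • cross3 (x - c) (n x)) Γ σ)
    (hdiv : ∀ F : (Fin 3 → ℝ) → (Fin 3 → ℝ), ContDiff ℝ 1 F →
      ∫ x in Ω, LinearMap.trace ℝ (Fin 3 → ℝ) (fderiv ℝ F x : (Fin 3 → ℝ) →ₗ[ℝ] (Fin 3 → ℝ))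
        = ∫ x in Γ ∪ Γ', F x ⬝ᵥ n x ∂σ) :
    (∀ x ∈ Ω, U x = 0) ∧ v = 0 ∧ ω = 0 ∧ ∃ k : ℝ, ∀ x ∈ Ω, p x = k := by
  have hp1 : ContDiff ℝ 1 p := hp.of_le (by norm_num)
  have henergy : ∫ x in Ω, grad3 p x ⬝ᵥ grad3 p x = 0 := by
    have hdivergence : -∫ x in Ω, grad3 p x ⬝ᵥ grad3 p x
        = ρ * ∫ x in Γ ∪ Γ', (p x • U x) ⬝ᵥ n x ∂σ := by
      rw [← hdiv (fun x => p x • U x) (hp1.smul hU), ← integral_const_mul, ← integral_neg]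
      exact setIntegral_congr_fun hopen.measurableSet fun x hx =>
        (mul_divergence_smul_eq_neg_grad3_dotProduct (hp1.differentiable one_ne_zero x)
          (hU.differentiable one_ne_zero x) (hdivfree x hx) (hU_eq x hx)).symm
    have hnonneg : 0 ≤ ∫ x in Γ ∪ Γ', (p x • U x) ⬝ᵥ n x ∂σ :=
      setIntegral_smul_dotProduct_nonneg hm.le h𝕀.posSemidef hv_eq hω_eq hint2 hint3 hbcΓ hbcΓ'
    linarith [mul_nonneg hρ.le hnonneg, setIntegral_nonneg (μ := volume) hopen.measurableSet
      fun x _ => dotProduct_self_nonneg (grad3 p x)]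
  have hgrad : ∀ x ∈ Ω, grad3 p x = 0 := fun x hx => dotProduct_self_eq_zero.1 <|
    eqOn_zero_of_setIntegral_eq_zero hopen
      ((continuous_grad3 hp1).dotProduct (continuous_grad3 hp1)).continuousOn
      (fun x _ => dotProduct_self_nonneg _) hint1 henergy hx
  have hU0 : ∀ x ∈ Ω, U x = 0 := fun x hx => by simpa [hgrad x hx, hρ.ne'] using hU_eq x hx
  have hUΓ : ∀ x ∈ Γ, U x = 0 := fun x hx =>
    EqOn.closure hU0 hU.continuous continuous_const (frontier_subset_closure (hbdry ▸ Or.inl hx))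
  obtain ⟨rfl, rfl⟩ :=
    rigid_velocities_eq_zero_of_forall_mem_eq_zero hm h𝕀 hv_eq hω_eq hint2 hint3 hbcΓ hUΓ
  exact ⟨hU0, rfl, rfl, hopen.exists_is_const_of_fderiv_eq_zero hconn.isPreconnected
    (hp1.differentiable one_ne_zero).differentiableOn
    fun x hx => fderiv_eq_zero_of_grad3_eq_zero (hgrad x hx)⟩

/-- (Uniqueness of the augmented Hodge decomposition.)  If
`ρU = −∇p` in `Ω`, `m v = ∫_Γ p n dS`, `𝕀ω = ∫_Γ p J dS`, with `∇·U = 0` in `Ω`,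
`U·n = v·n + ω·J` on `Γ`, and `U·n = 0` on `Γ'` (`J(x) = (x−c) × n(x)`), then
`U = 0`, `v = 0`, `ω = 0` and `p` is constant. -/
theorem augmented_hodge_decomposition_unique
    (Ω : Set (Fin 3 → ℝ)) (hopen : IsOpen Ω) (hconn : IsConnected Ω)
    (hbd : Bornology.IsBounded Ω)
    (Γ Γ' : Set (Fin 3 → ℝ)) (hdisj : Disjoint Γ Γ') (hbdry : Γ ∪ Γ' = frontier Ω)
    (σ : Measure (Fin 3 → ℝ)) (hσfin : σ (Γ ∪ Γ') ≠ ⊤)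
    (n : (Fin 3 → ℝ) → (Fin 3 → ℝ)) (hunit : ∀ x ∈ Γ ∪ Γ', ∑ i, n x i ^ 2 = 1)
    (ρ m : ℝ) (hρ : 0 < ρ) (hm : 0 < m)
    (𝕀 : Matrix (Fin 3) (Fin 3) ℝ) (h𝕀 : 𝕀.PosDef)
    (c : Fin 3 → ℝ) (v ω : Fin 3 → ℝ)
    (U : (Fin 3 → ℝ) → (Fin 3 → ℝ)) (p : (Fin 3 → ℝ) → ℝ)
    (hU : ContDiff ℝ 1 U) (hp : ContDiff ℝ 2 p)
    -- ∫_Γ n dS = 0 and ∫_Γ J dS = 0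
    (hn0 : (∫ x in Γ, n x ∂σ) = 0)
    (hJ0 : (∫ x in Γ, cross3 (x - c) (n x) ∂σ) = 0)
    -- the relations of the trivial decomposition
    (hU_eq : ∀ x ∈ Ω, ρ • U x = -grad3 p x)
    (hv_eq : m • v = ∫ x in Γ, p x • n x ∂σ)
    (hω_eq : 𝕀 *ᵥ ω = ∫ x in Γ, p x • cross3 (x - c) (n x) ∂σ)
    -- incompressibility and non-penetration conditions
    (hdivfree : ∀ x ∈ Ω,
      LinearMap.trace ℝ (Fin 3 → ℝ) (fderiv ℝ U x : (Fin 3 → ℝ) →ₗ[ℝ] (Fin 3 → ℝ)) = 0)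
    (hbcΓ : ∀ x ∈ Γ, U x ⬝ᵥ n x = v ⬝ᵥ n x + ω ⬝ᵥ cross3 (x - c) (n x))
    (hbcΓ' : ∀ x ∈ Γ', U x ⬝ᵥ n x = 0)
    -- integrability and the divergence theorem on the domain Ω
    (hint1 : IntegrableOn (fun x => grad3 p x ⬝ᵥ grad3 p x) Ω)
    (hint2 : IntegrableOn (fun x => p x • n x) Γ σ)
    (hint3 : IntegrableOn (fun x => p x • cross3 (x - c) (n x)) Γ σ)
    (hdiv : ∀ F : (Fin 3 → ℝ) → (Fin 3 → ℝ), ContDiff ℝ 1 F →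
      ∫ x in Ω, LinearMap.trace ℝ (Fin 3 → ℝ) (fderiv ℝ F x : (Fin 3 → ℝ) →ₗ[ℝ] (Fin 3 → ℝ))
        = ∫ x in Γ ∪ Γ', F x ⬝ᵥ n x ∂σ) :
    (∀ x ∈ Ω, U x = 0) ∧ v = 0 ∧ ω = 0 ∧ ∃ k : ℝ, ∀ x ∈ Ω, p x = k :=
  augmented_hodge_decomposition_unique_general Ω hopen hconn Γ Γ' hbdry σ n ρ m hρ hm 𝕀 h𝕀 c v ω U p
    hU hp hU_eq hv_eq hω_eq hdivfree hbcΓ hbcΓ' hint1 hint2 hint3 hdiv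
end

section
/- Let H be a finitely supported discrete Heaviside function on grid edges (values in [0,1]). Then Σ_{i,j} (GH)_{ij} = 0 and Σ_{i,j} ((x_i,y_j) − c) × (GH)_{ij} = 0, where (GH)_{ij} = ((H_{i+1/2,j}−H_{i−1/2,j})/h, (H_{i,j+1/2}−H_{i,j−1/2})/h) and c ∈ ℝ² is fixed. -/
lemma support_finite_comp_equiv {f : ℤ × ℤ → ℝ} (hf : (Function.support f).Finite)
    (e : ℤ × ℤ ≃ ℤ × ℤ) : (Function.support (fun ij => f (e ij))).Finite := by
  have : Function.support (fun ij => f (e ij)) = e ⁻¹' Function.support f := by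
    ext ij; simp [Function.support]
  rw [this]
  exact hf.preimage (e.injective.injOn)

lemma support_finite_sub_comp {f : ℤ × ℤ → ℝ} (hf : (Function.support f).Finite)
    (e : ℤ × ℤ ≃ ℤ × ℤ) :
    (Function.support (fun ij => f ij - f (e ij))).Finite := by
  refine (hf.union (support_finite_comp_equiv hf e)).subset ?_
  intro ij hij
  simp only [Function.mem_support, Set.mem_union] at *
  by_contra hc
  push_neg at hc
  simp [hc.1, hc.2] at hij

lemma tele (f : ℤ × ℤ → ℝ) (hf : (Function.support f).Finite) (e : ℤ × ℤ ≃ ℤ × ℤ) :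
    (∑ᶠ ij : ℤ × ℤ, (f ij - f (e ij))) = 0 := by
  rw [finsum_sub_distrib hf (support_finite_comp_equiv hf e),
    finsum_comp_equiv e, sub_self]

/-- For a finitely supported discrete Heaviside function on grid edges
(`Hx (i,j)` stands for `H_{i+1/2,j}` and `Hy (i,j)` for `H_{i,j+1/2}`, with values in `[0,1]`),
one has `Σ_{ij} (GH)_{ij} = 0` and `Σ_{ij} ((x_i, y_j) − c) × (GH)_{ij} = 0`, where
`(GH)_{ij} = ((H_{i+1/2,j} − H_{i−1/2,j})/h, (H_{i,j+1/2} − H_{i,j−1/2})/h)`, `x_i = i h`,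
`y_j = j h`, and the planar cross product `a × b = a₁b₂ − a₂b₁` is a scalar. -/
theorem discrete_heaviside_sums_eq_zero
    (h : ℝ) (hh : 0 < h) (c : ℝ × ℝ)
    (Hx Hy : ℤ × ℤ → ℝ)
    (hHx01 : ∀ ij, Hx ij ∈ Set.Icc (0 : ℝ) 1) (hHy01 : ∀ ij, Hy ij ∈ Set.Icc (0 : ℝ) 1)
    (hHx : (Function.support Hx).Finite) (hHy : (Function.support Hy).Finite) :
    (∑ᶠ ij : ℤ × ℤ, (Hx ij - Hx (ij.1 - 1, ij.2)) / h) = 0 ∧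
    (∑ᶠ ij : ℤ × ℤ, (Hy ij - Hy (ij.1, ij.2 - 1)) / h) = 0 ∧
    (∑ᶠ ij : ℤ × ℤ,
        (((ij.1 : ℝ) * h - c.1) * ((Hy ij - Hy (ij.1, ij.2 - 1)) / h)
          - ((ij.2 : ℝ) * h - c.2) * ((Hx ij - Hx (ij.1 - 1, ij.2)) / h))) = 0 := by
  have hei : ∀ ij : ℤ × ℤ,
      ((Equiv.subRight (1 : ℤ)).prodCongr (Equiv.refl ℤ)) ij = (ij.1 - 1, ij.2) :=
    fun ij => rfl
  have hej : ∀ ij : ℤ × ℤ,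
      ((Equiv.refl ℤ).prodCongr (Equiv.subRight (1 : ℤ))) ij = (ij.1, ij.2 - 1) :=
    fun ij => rfl
  set ei : ℤ × ℤ ≃ ℤ × ℤ := (Equiv.subRight (1 : ℤ)).prodCongr (Equiv.refl ℤ)
  set ej : ℤ × ℤ ≃ ℤ × ℤ := (Equiv.refl ℤ).prodCongr (Equiv.subRight (1 : ℤ))
  -- finite supports of the auxiliary functions
  have hfx : (Function.support (fun ij => Hx ij / h)).Finite := by
    refine hHx.subset fun ij hij => ?_
    simp only [Function.mem_support] at *
    intro hne; simp [hne] at hij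
  have hfy : (Function.support (fun ij => Hy ij / h)).Finite := by
    refine hHy.subset fun ij hij => ?_
    simp only [Function.mem_support] at *
    intro hne; simp [hne] at hij
  have hA : (Function.support (fun ij : ℤ × ℤ =>
      ((ij.1 : ℝ) * h - c.1) * Hy ij / h)).Finite := by
    refine hHy.subset fun ij hij => ?_
    simp only [Function.mem_support] at *
    intro hne; simp [hne] at hij
  have hB : (Function.support (fun ij : ℤ × ℤ =>
      ((ij.2 : ℝ) * h - c.2) * Hx ij / h)).Finite := by
    refine hHx.subset fun ij hij => ?_
    simp only [Function.mem_support] at *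
    intro hne; simp [hne] at hij
  refine ⟨?_, ?_, ?_⟩
  · rw [← tele (fun ij => Hx ij / h) hfx ei]
    exact finsum_congr fun ij => by rw [hei]; ring
  · rw [← tele (fun ij => Hy ij / h) hfy ej]
    exact finsum_congr fun ij => by rw [hej]; ring
  · set A : ℤ × ℤ → ℝ := fun ij => ((ij.1 : ℝ) * h - c.1) * Hy ij / h with hAdef
    set B : ℤ × ℤ → ℝ := fun ij => ((ij.2 : ℝ) * h - c.2) * Hx ij / h with hBdef
    have key : (∑ᶠ ij : ℤ × ℤ,
        (((ij.1 : ℝ) * h - c.1) * ((Hy ij - Hy (ij.1, ij.2 - 1)) / h)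
          - ((ij.2 : ℝ) * h - c.2) * ((Hx ij - Hx (ij.1 - 1, ij.2)) / h)))
        = ∑ᶠ ij : ℤ × ℤ, ((A ij - A (ej ij)) - (B ij - B (ei ij))) := by
      refine finsum_congr fun ij => ?_
      rw [hei, hej, hAdef, hBdef]
      simp only []
      ring
    rw [key, finsum_sub_distrib (support_finite_sub_comp hA ej)
      (support_finite_sub_comp hB ei), tele A hA ej, tele B hB ei, sub_self]
end

section
/- The discrete operator L^h defined by (L^h p) = −D((H/ρ) G p) + (GH)(1/m)(Σ p GH h²) + J^h · 𝕀⁻¹(Σ p J^h h²)-type coupling is symmetric with respect to the standard inner product on ℝ^{|Ω^h|}: ⟨L^h p⁽¹⁾, p⁽²⁾⟩ = ⟨p⁽¹⁾, L^h p⁽²⁾⟩ for all grid functions p⁽¹⁾, p⁽²⁾. -/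
/-! Writing `G` for the forward and `D` for the backward divided difference along a grid
direction, summation by parts gives `⟨-D f, g⟩ = ⟨f, G g⟩` whenever `g` is finitely supported.
Hence `⟨L^h q, r⟩ = Σ (H/ρ) G q · G r + (h²/m) ⟨q, GH⟩ ⟨r, GH⟩ + (h²/I) ⟨q, J^h⟩ ⟨r, J^h⟩`,
which is symmetric in `q` and `r`. -/

/-- `(G_x H)_{ij} = (H_{i+1/2,j} − H_{i−1/2,j})/h`, where `Hx (i,j)` stands for `H_{i+1/2,j}`. -/
noncomputable def GHx (h : ℝ) (Hx : ℤ × ℤ → ℝ) (ij : ℤ × ℤ) : ℝ :=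
  (Hx ij - Hx (ij.1 - 1, ij.2)) / h

/-- `(G_y H)_{ij} = (H_{i,j+1/2} − H_{i,j−1/2})/h`, where `Hy (i,j)` stands for `H_{i,j+1/2}`. -/
noncomputable def GHy (h : ℝ) (Hy : ℤ × ℤ → ℝ) (ij : ℤ × ℤ) : ℝ :=
  (Hy ij - Hy (ij.1, ij.2 - 1)) / h

/-- The discrete operator
`L^h p = −D((H/ρ)Gp) + (GH)(1/m)(Σ p GH h²) + J^h 𝕀⁻¹ (Σ p J^h h²)` on the 2-D MAC grid
(with scalar inertia `I`). -/
noncomputable def Lh (h m I : ℝ) (ρx ρy Hx Hy Jh : ℤ × ℤ → ℝ) (p : ℤ × ℤ → ℝ)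
    (ij : ℤ × ℤ) : ℝ :=
  -(((Hx ij / ρx ij) * ((p (ij.1 + 1, ij.2) - p ij) / h)
      - (Hx (ij.1 - 1, ij.2) / ρx (ij.1 - 1, ij.2)) * ((p ij - p (ij.1 - 1, ij.2)) / h)) / h
    + ((Hy ij / ρy ij) * ((p (ij.1, ij.2 + 1) - p ij) / h)
      - (Hy (ij.1, ij.2 - 1) / ρy (ij.1, ij.2 - 1)) * ((p ij - p (ij.1, ij.2 - 1)) / h)) / h)
  + (GHx h Hx ij * (∑ᶠ kl : ℤ × ℤ, p kl * GHx h Hx kl)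
      + GHy h Hy ij * (∑ᶠ kl : ℤ × ℤ, p kl * GHy h Hy kl)) * h ^ 2 / m
  + Jh ij * (∑ᶠ kl : ℤ × ℤ, p kl * Jh kl) * h ^ 2 / I

open Function fwdDiff

section SummationByParts

variable {α G R : Type*}

theorem finsum_add_mul_of_hasFiniteSupport [Semiring R] {r : α → R} (hr : HasFiniteSupport r)
    (f g : α → R) : ∑ᶠ x, (f x + g x) * r x = ∑ᶠ x, f x * r x + ∑ᶠ x, g x * r x := by
  simp only [add_mul]
  exact finsum_add_distrib (hr.fun_mul_right f) (hr.fun_mul_right g)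

theorem finsum_const_mul_mul_of_hasFiniteSupport [CommSemiring R] {r : α → R}
    (hr : HasFiniteSupport r) (c : R) (u : α → R) :
    ∑ᶠ x, c * u x * r x = c * ∑ᶠ x, r x * u x := by
  rw [mul_finsum' _ _ (hr.fun_mul_left u)]
  exact finsum_congr fun x => by ring

theorem finsum_comp_sub_mul [AddGroup G] [Mul R] [AddCommMonoid R] (e : G) (f g : G → R) :
    ∑ᶠ x, f (x - e) * g x = ∑ᶠ x, f x * g (x + e) := by
  rw [← finsum_comp_equiv (Equiv.addRight e)]
  simp

theorem finsum_neg_fwdDiff_comp_sub_div_mul [AddCommGroup G] [Field R] (e : G) (h : R) (f g : G → R)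
    (hg : HasFiniteSupport g) :
    ∑ᶠ x, -(Δ_[e] f (x - e) / h) * g x = ∑ᶠ x, f x * (Δ_[e] g x / h) := by
  have hg_div : HasFiniteSupport fun x => g x / h :=
    hg.subset ((support_div g fun _ => h).trans_subset Set.inter_subset_left)
  have hg_shift : HasFiniteSupport fun x => g (x + e) / h :=
    (hg_div.comp_of_injective (add_left_injective e) :)
  calc ∑ᶠ x, -(Δ_[e] f (x - e) / h) * g x
      = ∑ᶠ x, (f (x - e) * (g x / h) - f x * (g x / h)) :=
        finsum_congr fun x => by simp only [fwdDiff, sub_add_cancel]; ring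
    _ = ∑ᶠ x, f x * (g (x + e) / h) - ∑ᶠ x, f x * (g x / h) := by
        rw [finsum_sub_distrib (hg_div.fun_mul_right _) (hg_div.fun_mul_right f),
          finsum_comp_sub_mul e f fun x => g x / h]
    _ = ∑ᶠ x, f x * (Δ_[e] g x / h) := by
        rw [← finsum_sub_distrib (hg_shift.fun_mul_right f) (hg_div.fun_mul_right f)]
        exact finsum_congr fun x => by simp only [fwdDiff]; ring

end SummationByParts

noncomputable def LhForm (h m I : ℝ) (ρx ρy Hx Hy Jh : ℤ × ℤ → ℝ) (q r : ℤ × ℤ → ℝ) : ℝ :=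
  ∑ᶠ x, Hx x / ρx x * (Δ_[(1, 0)] q x / h) * (Δ_[(1, 0)] r x / h)
  + ∑ᶠ x, Hy x / ρy x * (Δ_[(0, 1)] q x / h) * (Δ_[(0, 1)] r x / h)
  + ((∑ᶠ x, q x * GHx h Hx x) * (∑ᶠ x, r x * GHx h Hx x)
    + (∑ᶠ x, q x * GHy h Hy x) * (∑ᶠ x, r x * GHy h Hy x)) * h ^ 2 / m
  + (∑ᶠ x, q x * Jh x) * (∑ᶠ x, r x * Jh x) * h ^ 2 / I

theorem LhForm_comm (h m I : ℝ) (ρx ρy Hx Hy Jh q r : ℤ × ℤ → ℝ) :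
    LhForm h m I ρx ρy Hx Hy Jh q r = LhForm h m I ρx ρy Hx Hy Jh r q := by
  unfold LhForm
  rw [finsum_congr fun x => mul_right_comm (Hx x / ρx x) (Δ_[(1, 0)] q x / h) _,
    finsum_congr fun x => mul_right_comm (Hy x / ρy x) (Δ_[(0, 1)] q x / h) _]
  ring

theorem Lh_eq_fwdDiff (h m I : ℝ) (ρx ρy Hx Hy Jh q : ℤ × ℤ → ℝ) (x : ℤ × ℤ) :
    Lh h m I ρx ρy Hx Hy Jh q x =
      -(Δ_[(1, 0)] (fun y => Hx y / ρx y * (Δ_[(1, 0)] q y / h)) (x - (1, 0)) / h)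
      + -(Δ_[(0, 1)] (fun y => Hy y / ρy y * (Δ_[(0, 1)] q y / h)) (x - (0, 1)) / h)
      + (∑ᶠ y, q y * GHx h Hx y) * h ^ 2 / m * GHx h Hx x
      + (∑ᶠ y, q y * GHy h Hy y) * h ^ 2 / m * GHy h Hy x
      + (∑ᶠ y, q y * Jh y) * h ^ 2 / I * Jh x := by
  obtain ⟨i, j⟩ := x
  simp only [Lh, fwdDiff, Prod.mk_add_mk, Prod.mk_sub_mk, add_zero, sub_zero, sub_add_cancel]
  ring

theorem finsum_Lh_mul (h m I : ℝ) (ρx ρy Hx Hy Jh q r : ℤ × ℤ → ℝ) (hr : HasFiniteSupport r) :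
    ∑ᶠ x, Lh h m I ρx ρy Hx Hy Jh q x * r x = LhForm h m I ρx ρy Hx Hy Jh q r := by
  simp only [Lh_eq_fwdDiff, finsum_add_mul_of_hasFiniteSupport hr,
    finsum_neg_fwdDiff_comp_sub_div_mul _ _ _ _ hr, finsum_const_mul_mul_of_hasFiniteSupport hr]
  unfold LhForm
  ring

theorem Lh_symmetric_general
    (h m I : ℝ)
    (ρx ρy : ℤ × ℤ → ℝ)
    (Hx Hy : ℤ × ℤ → ℝ)
    (Jh : ℤ × ℤ → ℝ)
    (p₁ p₂ : ℤ × ℤ → ℝ)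
    (hp₁ : (Function.support p₁).Finite) (hp₂ : (Function.support p₂).Finite) :
    (∑ᶠ ij : ℤ × ℤ, Lh h m I ρx ρy Hx Hy Jh p₁ ij * p₂ ij)
      = ∑ᶠ ij : ℤ × ℤ, p₁ ij * Lh h m I ρx ρy Hx Hy Jh p₂ ij := by
  calc (∑ᶠ ij : ℤ × ℤ, Lh h m I ρx ρy Hx Hy Jh p₁ ij * p₂ ij)
      = LhForm h m I ρx ρy Hx Hy Jh p₁ p₂ := finsum_Lh_mul h m I ρx ρy Hx Hy Jh p₁ p₂ hp₂
    _ = LhForm h m I ρx ρy Hx Hy Jh p₂ p₁ := LhForm_comm h m I ρx ρy Hx Hy Jh p₁ p₂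
    _ = ∑ᶠ ij : ℤ × ℤ, Lh h m I ρx ρy Hx Hy Jh p₂ ij * p₁ ij :=
        (finsum_Lh_mul h m I ρx ρy Hx Hy Jh p₂ p₁ hp₁).symm
    _ = ∑ᶠ ij : ℤ × ℤ, p₁ ij * Lh h m I ρx ρy Hx Hy Jh p₂ ij :=
        finsum_congr fun ij => mul_comm _ _

/-- The discrete operator `L^h` is symmetric with respect to the standard
inner product: `⟨L^h p⁽¹⁾, p⁽²⁾⟩ = ⟨p⁽¹⁾, L^h p⁽²⁾⟩` for all grid functions. -/
theorem Lh_symmetric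
    (h m I : ℝ) (hh : 0 < h) (hm : 0 < m) (hI : 0 < I)
    (ρx ρy : ℤ × ℤ → ℝ) (hρx : ∀ ij, 0 < ρx ij) (hρy : ∀ ij, 0 < ρy ij)
    (Hx Hy : ℤ × ℤ → ℝ)
    (hHx01 : ∀ ij, Hx ij ∈ Set.Icc (0 : ℝ) 1) (hHy01 : ∀ ij, Hy ij ∈ Set.Icc (0 : ℝ) 1)
    (hHx : (Function.support Hx).Finite) (hHy : (Function.support Hy).Finite)
    (c : ℝ × ℝ) (xt : ℤ × ℤ → ℝ × ℝ) (Jh : ℤ × ℤ → ℝ)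
    (hJh : ∀ ij, Jh ij = ((xt ij).1 - c.1) * GHy h Hy ij - ((xt ij).2 - c.2) * GHx h Hx ij)
    (p₁ p₂ : ℤ × ℤ → ℝ)
    (hp₁ : (Function.support p₁).Finite) (hp₂ : (Function.support p₂).Finite) :
    (∑ᶠ ij : ℤ × ℤ, Lh h m I ρx ρy Hx Hy Jh p₁ ij * p₂ ij)
      = ∑ᶠ ij : ℤ × ℤ, p₁ ij * Lh h m I ρx ρy Hx Hy Jh p₂ ij :=
  Lh_symmetric_general h m I ρx ρy Hx Hy Jh p₁ p₂ hp₁ hp₂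
end

section
/- The discrete operator L^h is positive semi-definite: ⟨L^h p, p⟩ ≥ 0 for all p ∈ ℝ^{|Ω^h|}, and its kernel is exactly the span of the constant function 1 on Ω^h. -/
open Function

section SummationByParts

variable {α : Type*}

theorem finsum_sub_comp_symm_mul {R : Type*} [CommRing R] (e : α ≃ α) (f p : α → R)
    (hp : HasFiniteSupport p) :
    ∑ᶠ x, (f x - f (e.symm x)) * p x = -∑ᶠ x, f x * (p (e x) - p x) := by
  have shift : ∑ᶠ x, f (e.symm x) * p x = ∑ᶠ x, f x * p (e x) := by
    simpa using finsum_comp_equiv e.symm (f := fun x => f x * p (e x))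
  have hpe : HasFiniteSupport fun x => p (e x) := hp.fun_comp_of_injective e.injective
  simp only [sub_mul, mul_sub]
  rw [finsum_sub_distrib (by fun_prop) (by fun_prop),
    finsum_sub_distrib (hpe.fun_mul_right f) (by fun_prop), shift]
  ring

theorem finsum_mul_eq_const_mul_finsum {R : Type*} [NonUnitalNonAssocSemiring R]
    [NoZeroDivisors R] {g p : α → R} {k : R} (hk : ∀ x ∈ support g, p x = k) :
    ∑ᶠ x, p x * g x = k * ∑ᶠ x, g x := by
  rw [mul_finsum]
  refine finsum_congr fun x => ?_
  by_cases hx : g x = 0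
  · simp [hx]
  · rw [hk x hx]

end SummationByParts

section EdgeEnergy

variable {α : Type*} (e : α ≃ α) (a : α → ℝ) (h : ℝ) (p : α → ℝ)

noncomputable def edgeEnergy : ℝ :=
  ∑ᶠ x, a x * ((p (e x) - p x) / h) ^ 2

/-- The paper's `−D(a G p)` along the edges `x — e x`, with `G` the forward and `D` the backward
difference quotient. -/
noncomputable def negDivGrad (x : α) : ℝ :=
  -((a x * ((p (e x) - p x) / h) - a (e.symm x) * ((p x - p (e.symm x)) / h)) / h)

variable {e a h p}

theorem finsum_negDivGrad_mul (hp : HasFiniteSupport p) :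
    ∑ᶠ x, negDivGrad e a h p x * p x = edgeEnergy e a h p := by
  have sbp := finsum_sub_comp_symm_mul e (fun x => a x * ((p (e x) - p x) / h)) p hp
  simp only [Equiv.apply_symm_apply] at sbp
  calc ∑ᶠ x, negDivGrad e a h p x * p x
      = -h⁻¹ * ∑ᶠ x, (a x * ((p (e x) - p x) / h)
          - a (e.symm x) * ((p x - p (e.symm x)) / h)) * p x := by
        rw [mul_finsum]
        exact finsum_congr fun x => by rw [negDivGrad]; ring
    _ = h⁻¹ * ∑ᶠ x, a x * ((p (e x) - p x) / h) * (p (e x) - p x) := by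
        rw [sbp]; ring
    _ = edgeEnergy e a h p := by
        rw [mul_finsum]
        exact finsum_congr fun x => by ring

theorem edgeEnergy_nonneg (ha : ∀ x, 0 ≤ a x) : 0 ≤ edgeEnergy e a h p :=
  finsum_nonneg fun x => mul_nonneg (ha x) (sq_nonneg _)

theorem apply_eq_of_edgeEnergy_eq_zero (hh : h ≠ 0) (ha : ∀ x, 0 ≤ a x)
    (hfin : HasFiniteSupport a) (hE : edgeEnergy e a h p = 0) {x : α} (hx : a x ≠ 0) :
    p (e x) = p x := by
  have hle : a x * ((p (e x) - p x) / h) ^ 2 ≤ edgeEnergy e a h p :=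
    single_le_finsum (f := fun y => a y * ((p (e y) - p y) / h) ^ 2) x (hfin.fun_mul_left _)
      fun y => mul_nonneg (ha y) (sq_nonneg _)
  rw [hE] at hle
  have h0 : a x * ((p (e x) - p x) / h) ^ 2 = 0 :=
    le_antisymm hle (mul_nonneg (ha x) (sq_nonneg _))
  simpa [hx, hh, sub_eq_zero] using h0

theorem negDivGrad_eq_zero_of_eqOn {S : Set α} {k : ℝ}
    (hS : ∀ x, a x ≠ 0 → x ∈ S ∧ e x ∈ S) (hk : ∀ x ∈ S, p x = k) :
    negDivGrad e a h p = 0 := by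
  have hflux : ∀ x, a x * ((p (e x) - p x) / h) = 0 := fun x => by
    by_cases hx : a x = 0
    · simp [hx]
    · simp [hk _ (hS x hx).1, hk _ (hS x hx).2]
  funext x
  have hflux' := hflux (e.symm x)
  simp only [Equiv.apply_symm_apply] at hflux'
  simp [negDivGrad, hflux x, hflux']

theorem support_sub_comp_symm_div_subset {S : Set α}
    (hS : ∀ x, a x ≠ 0 → x ∈ S ∧ e x ∈ S) :
    support (fun x => (a x - a (e.symm x)) / h) ⊆ S := by
  intro x hx
  by_contra hxS
  have h1 : a x = 0 := by_contra fun h1 => hxS (hS x h1).1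
  have h2 : a (e.symm x) = 0 := by_contra fun h2 => hxS (by simpa using (hS _ h2).2)
  simp [h1, h2] at hx

end EdgeEnergy

section Grid

@[simps]
def shiftX : ℤ × ℤ ≃ ℤ × ℤ where
  toFun ij := (ij.1 + 1, ij.2)
  invFun ij := (ij.1 - 1, ij.2)
  left_inv _ := by simp
  right_inv _ := by simp

@[simps]
def shiftY : ℤ × ℤ ≃ ℤ × ℤ where
  toFun ij := (ij.1, ij.2 + 1)
  invFun ij := (ij.1, ij.2 - 1)
  left_inv _ := by simp
  right_inv _ := by simp

variable {h m I : ℝ} {ρx ρy Hx Hy Jh p : ℤ × ℤ → ℝ}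

theorem Lh_eq_negDivGrad_add (ij : ℤ × ℤ) :
    Lh h m I ρx ρy Hx Hy Jh p ij =
      negDivGrad shiftX (fun ij => Hx ij / ρx ij) h p ij
        + negDivGrad shiftY (fun ij => Hy ij / ρy ij) h p ij
        + (∑ᶠ kl, p kl * GHx h Hx kl) * h ^ 2 / m * GHx h Hx ij
        + (∑ᶠ kl, p kl * GHy h Hy kl) * h ^ 2 / m * GHy h Hy ij
        + (∑ᶠ kl, p kl * Jh kl) * h ^ 2 / I * Jh ij := by
  simp only [Lh, negDivGrad, shiftX_apply, shiftX_symm_apply, shiftY_apply, shiftY_symm_apply]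
  ring

theorem finsum_Lh_mul_s15 (hp : HasFiniteSupport p) :
    ∑ᶠ ij, Lh h m I ρx ρy Hx Hy Jh p ij * p ij =
      edgeEnergy shiftX (fun ij => Hx ij / ρx ij) h p
        + edgeEnergy shiftY (fun ij => Hy ij / ρy ij) h p
        + ((∑ᶠ kl, p kl * GHx h Hx kl) ^ 2 + (∑ᶠ kl, p kl * GHy h Hy kl) ^ 2) * h ^ 2 / m
        + (∑ᶠ kl, p kl * Jh kl) ^ 2 * h ^ 2 / I := by
  simp only [Lh_eq_negDivGrad_add, add_mul]
  rw [finsum_add_distrib (by fun_prop) (by fun_prop),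
    finsum_add_distrib (by fun_prop) (by fun_prop), finsum_add_distrib (by fun_prop) (by fun_prop),
    finsum_add_distrib (by fun_prop) (by fun_prop), finsum_negDivGrad_mul hp,
    finsum_negDivGrad_mul hp]
  simp only [mul_assoc, ← mul_finsum, mul_comm (GHx h Hx _), mul_comm (GHy h Hy _),
    mul_comm (Jh _)]
  ring

theorem edgeEnergy_add_le_finsum_Lh_mul (hm : 0 ≤ m) (hI : 0 ≤ I) (hp : HasFiniteSupport p) :
    edgeEnergy shiftX (fun ij => Hx ij / ρx ij) h p
        + edgeEnergy shiftY (fun ij => Hy ij / ρy ij) h p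
      ≤ ∑ᶠ ij, Lh h m I ρx ρy Hx Hy Jh p ij * p ij := by
  rw [finsum_Lh_mul_s15 hp]
  have : 0 ≤ ((∑ᶠ kl, p kl * GHx h Hx kl) ^ 2 + (∑ᶠ kl, p kl * GHy h Hy kl) ^ 2) * h ^ 2 / m
      + (∑ᶠ kl, p kl * Jh kl) ^ 2 * h ^ 2 / I := by positivity
  linarith

theorem finsum_Lh_mul_nonneg (hm : 0 ≤ m) (hI : 0 ≤ I) (hρx : ∀ ij, 0 < ρx ij)
    (hρy : ∀ ij, 0 < ρy ij) (hHx : ∀ ij, 0 ≤ Hx ij) (hHy : ∀ ij, 0 ≤ Hy ij)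
    (hp : HasFiniteSupport p) : 0 ≤ ∑ᶠ ij, Lh h m I ρx ρy Hx Hy Jh p ij * p ij :=
  (add_nonneg (edgeEnergy_nonneg fun ij => div_nonneg (hHx ij) (hρx ij).le)
    (edgeEnergy_nonneg fun ij => div_nonneg (hHy ij) (hρy ij).le)).trans
    (edgeEnergy_add_le_finsum_Lh_mul hm hI hp)

theorem apply_eq_of_finsum_Lh_mul_eq_zero (hh : h ≠ 0) (hm : 0 ≤ m) (hI : 0 ≤ I)
    (hρx : ∀ ij, 0 < ρx ij) (hρy : ∀ ij, 0 < ρy ij) (hHx : ∀ ij, 0 ≤ Hx ij)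
    (hHy : ∀ ij, 0 ≤ Hy ij) (hfinx : HasFiniteSupport Hx) (hfiny : HasFiniteSupport Hy)
    (hp : HasFiniteSupport p) (hL0 : ∑ᶠ ij, Lh h m I ρx ρy Hx Hy Jh p ij * p ij = 0) :
    (∀ ij, Hx ij ≠ 0 → p (ij.1 + 1, ij.2) = p ij) ∧
      (∀ ij, Hy ij ≠ 0 → p (ij.1, ij.2 + 1) = p ij) := by
  have hax : ∀ ij, 0 ≤ Hx ij / ρx ij := fun ij => div_nonneg (hHx ij) (hρx ij).le
  have hay : ∀ ij, 0 ≤ Hy ij / ρy ij := fun ij => div_nonneg (hHy ij) (hρy ij).le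
  have hEx := edgeEnergy_nonneg (e := shiftX) (h := h) (p := p) hax
  have hEy := edgeEnergy_nonneg (e := shiftY) (h := h) (p := p) hay
  have hE := (edgeEnergy_add_le_finsum_Lh_mul hm hI hp).trans_eq hL0
  obtain ⟨hEx0, hEy0⟩ :=
    (add_eq_zero_iff_of_nonneg hEx hEy).1 (hE.antisymm (add_nonneg hEx hEy))
  constructor
  · refine fun ij hij => apply_eq_of_edgeEnergy_eq_zero hh hax ?_ hEx0
      (div_ne_zero hij (hρx ij).ne')
    exact hfinx.subset fun ij hij => (div_ne_zero_iff.1 hij).1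
  · refine fun ij hij => apply_eq_of_edgeEnergy_eq_zero hh hay ?_ hEy0
      (div_ne_zero hij (hρy ij).ne')
    exact hfiny.subset fun ij hij => (div_ne_zero_iff.1 hij).1

theorem Lh_eq_zero_of_eqOn {S : Set (ℤ × ℤ)} {k : ℝ}
    (hedgex : ∀ ij, Hx ij ≠ 0 → ij ∈ S ∧ (ij.1 + 1, ij.2) ∈ S)
    (hedgey : ∀ ij, Hy ij ≠ 0 → ij ∈ S ∧ (ij.1, ij.2 + 1) ∈ S)
    (hJ : ∀ ij, Jh ij ≠ 0 → ij ∈ S) (hGHx0 : ∑ᶠ ij, GHx h Hx ij = 0)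
    (hGHy0 : ∑ᶠ ij, GHy h Hy ij = 0) (hJ0 : ∑ᶠ ij, Jh ij = 0) (hk : ∀ ij ∈ S, p ij = k) :
    Lh h m I ρx ρy Hx Hy Jh p = 0 := by
  have hGHx : support (GHx h Hx) ⊆ S := support_sub_comp_symm_div_subset (e := shiftX) hedgex
  have hGHy : support (GHy h Hy) ⊆ S := support_sub_comp_symm_div_subset (e := shiftY) hedgey
  funext ij
  rw [Lh_eq_negDivGrad_add,
    negDivGrad_eq_zero_of_eqOn (fun ij hij => hedgex ij (div_ne_zero_iff.1 hij).1) hk,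
    negDivGrad_eq_zero_of_eqOn (fun ij hij => hedgey ij (div_ne_zero_iff.1 hij).1) hk,
    finsum_mul_eq_const_mul_finsum fun x hx => hk x (hGHx hx),
    finsum_mul_eq_const_mul_finsum fun x hx => hk x (hGHy hx),
    finsum_mul_eq_const_mul_finsum fun x hx => hk x (hJ x hx), hGHx0, hGHy0, hJ0]
  simp

end Grid

theorem Lh_posSemidef_and_kernel_general
    (h m I : ℝ) (hh : 0 < h) (hm : 0 < m) (hI : 0 < I)
    (ρx ρy : ℤ × ℤ → ℝ) (hρx : ∀ ij, 0 < ρx ij) (hρy : ∀ ij, 0 < ρy ij)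
    (Hx Hy : ℤ × ℤ → ℝ)
    (hHx01 : ∀ ij, Hx ij ∈ Set.Icc (0 : ℝ) 1) (hHy01 : ∀ ij, Hy ij ∈ Set.Icc (0 : ℝ) 1)
    (Jh : ℤ × ℤ → ℝ)
    (S : Finset (ℤ × ℤ))
    -- edges with nonzero Heaviside value join nodes of Ω^h = S
    (hedgex : ∀ ij : ℤ × ℤ, Hx ij ≠ 0 → ij ∈ S ∧ (ij.1 + 1, ij.2) ∈ S)
    (hedgey : ∀ ij : ℤ × ℤ, Hy ij ≠ 0 → ij ∈ S ∧ (ij.1, ij.2 + 1) ∈ S)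
    -- J^h is supported on nodes of Ω^h
    (hJsupp : ∀ ij : ℤ × ℤ, Jh ij ≠ 0 → ij ∈ S)
    -- connectivity of Ω^h through edges with nonzero Heaviside value
    (hconn : ∀ q : ℤ × ℤ → ℝ,
      (∀ ij : ℤ × ℤ, Hx ij ≠ 0 → q (ij.1 + 1, ij.2) = q ij) →
      (∀ ij : ℤ × ℤ, Hy ij ≠ 0 → q (ij.1, ij.2 + 1) = q ij) →
      ∀ a ∈ S, ∀ b ∈ S, q a = q b)
    -- the discrete identities Σ GH = 0 and Σ J^h = 0
    (hGHx0 : (∑ᶠ ij : ℤ × ℤ, GHx h Hx ij) = 0)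
    (hGHy0 : (∑ᶠ ij : ℤ × ℤ, GHy h Hy ij) = 0)
    (hJ0 : (∑ᶠ ij : ℤ × ℤ, Jh ij) = 0) :
    (∀ p : ℤ × ℤ → ℝ, (Function.support p).Finite →
      0 ≤ ∑ᶠ ij : ℤ × ℤ, Lh h m I ρx ρy Hx Hy Jh p ij * p ij) ∧
    (∀ p : ℤ × ℤ → ℝ, (∀ ij, p ij ≠ 0 → ij ∈ S) →
      ((∀ ij ∈ S, Lh h m I ρx ρy Hx Hy Jh p ij = 0) ↔ ∃ k : ℝ, ∀ ij ∈ S, p ij = k)) := by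
  have hfinx : HasFiniteSupport Hx := S.finite_toSet.subset fun ij hij => (hedgex ij hij).1
  have hfiny : HasFiniteSupport Hy := S.finite_toSet.subset fun ij hij => (hedgey ij hij).1
  refine ⟨fun p hp => ?_, fun p hpS => ⟨fun hL => ?_, fun ⟨k, hk⟩ ij _ =>
    congrFun (Lh_eq_zero_of_eqOn (S := S) hedgex hedgey hJsupp hGHx0 hGHy0 hJ0 hk) ij⟩⟩
  · exact finsum_Lh_mul_nonneg hm.le hI.le hρx hρy (fun ij => (hHx01 ij).1)
      (fun ij => (hHy01 ij).1) hp
  · have hL0 : ∑ᶠ ij, Lh h m I ρx ρy Hx Hy Jh p ij * p ij = 0 :=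
      finsum_eq_zero_of_forall_eq_zero fun ij => by
        by_cases hij : p ij = 0
        · rw [hij, mul_zero]
        · rw [hL ij (hpS ij hij), zero_mul]
    obtain ⟨hx, hy⟩ := apply_eq_of_finsum_Lh_mul_eq_zero hh.ne' hm.le hI.le hρx hρy
      (fun ij => (hHx01 ij).1) (fun ij => (hHy01 ij).1) hfinx hfiny
      (S.finite_toSet.subset hpS) hL0
    rcases S.eq_empty_or_nonempty with rfl | ⟨a, ha⟩
    · exact ⟨0, by simp⟩
    · exact ⟨p a, fun ij hij => hconn p hx hy ij hij a ha⟩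

/-- The discrete operator `L^h` is positive semi-definite,
`⟨L^h p, p⟩ ≥ 0` for every grid function `p` on `Ω^h`, and its kernel is exactly the span of
the constant function `1` on `Ω^h`.  Here `S` plays the role of the finite node set `Ω^h`;
`H > 0` on all edges between nodes of `S`, edges carrying a nonzero Heaviside value have
both endpoints in `S` and the resulting edge-graph on `S` is connected, and the discrete
identities `Σ GH = 0` and `Σ J^h = 0` are available. -/
theorem Lh_posSemidef_and_kernel
    (h m I : ℝ) (hh : 0 < h) (hm : 0 < m) (hI : 0 < I)
    (ρx ρy : ℤ × ℤ → ℝ) (hρx : ∀ ij, 0 < ρx ij) (hρy : ∀ ij, 0 < ρy ij)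
    (Hx Hy : ℤ × ℤ → ℝ)
    (hHx01 : ∀ ij, Hx ij ∈ Set.Icc (0 : ℝ) 1) (hHy01 : ∀ ij, Hy ij ∈ Set.Icc (0 : ℝ) 1)
    (hHx : (Function.support Hx).Finite) (hHy : (Function.support Hy).Finite)
    (Jh : ℤ × ℤ → ℝ)
    (S : Finset (ℤ × ℤ))
    -- edges with nonzero Heaviside value join nodes of Ω^h = S
    (hedgex : ∀ ij : ℤ × ℤ, Hx ij ≠ 0 → ij ∈ S ∧ (ij.1 + 1, ij.2) ∈ S)
    (hedgey : ∀ ij : ℤ × ℤ, Hy ij ≠ 0 → ij ∈ S ∧ (ij.1, ij.2 + 1) ∈ S)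
    -- J^h is supported on nodes of Ω^h
    (hJsupp : ∀ ij : ℤ × ℤ, Jh ij ≠ 0 → ij ∈ S)
    -- H is positive on edges between nodes of Ω^h
    (hposx : ∀ ij : ℤ × ℤ, ij ∈ S → (ij.1 + 1, ij.2) ∈ S → 0 < Hx ij)
    (hposy : ∀ ij : ℤ × ℤ, ij ∈ S → (ij.1, ij.2 + 1) ∈ S → 0 < Hy ij)
    -- connectivity of Ω^h through edges with nonzero Heaviside value
    (hconn : ∀ q : ℤ × ℤ → ℝ,
      (∀ ij : ℤ × ℤ, Hx ij ≠ 0 → q (ij.1 + 1, ij.2) = q ij) →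
      (∀ ij : ℤ × ℤ, Hy ij ≠ 0 → q (ij.1, ij.2 + 1) = q ij) →
      ∀ a ∈ S, ∀ b ∈ S, q a = q b)
    -- the discrete identities Σ GH = 0 and Σ J^h = 0
    (hGHx0 : (∑ᶠ ij : ℤ × ℤ, GHx h Hx ij) = 0)
    (hGHy0 : (∑ᶠ ij : ℤ × ℤ, GHy h Hy ij) = 0)
    (hJ0 : (∑ᶠ ij : ℤ × ℤ, Jh ij) = 0) :
    (∀ p : ℤ × ℤ → ℝ, (Function.support p).Finite →
      0 ≤ ∑ᶠ ij : ℤ × ℤ, Lh h m I ρx ρy Hx Hy Jh p ij * p ij) ∧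
    (∀ p : ℤ × ℤ → ℝ, (∀ ij, p ij ≠ 0 → ij ∈ S) →
      ((∀ ij ∈ S, Lh h m I ρx ρy Hx Hy Jh p ij = 0) ↔ ∃ k : ℝ, ∀ ij ∈ S, p ij = k)) :=
  Lh_posSemidef_and_kernel_general h m I hh hm hI ρx ρy hρx hρy Hx Hy hHx01 hHy01 Jh S hedgex hedgey
    hJsupp hconn hGHx0 hGHy0 hJ0
end

section
/- Discrete energy stability: if (U,v,ω) = (U*,v*,ω*) − (ρ⁻¹Gp, m⁻¹Σ(pGH)h², 𝕀⁻¹Σ(pJ^h)h²) where p solves L^h p = −D(HU*) + v*·GH + ω*·J^h, then the discrete kinetic energies satisfy E_h(U*,v*,ω*) ≥ E_h(U,v,ω), where E_h(U,v,ω) = ½∫ρH U·U dΩ^h + ½m|v|² + ½ω·𝕀ω. -/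
/-- The discrete kinetic energy
`E_h(U,v,ω) = ½∫ρH U·U dΩ^h + ½m|v|² + ½ω·𝕀ω` on the 2-D MAC grid. -/
noncomputable def Eh (h m I : ℝ) (ρx ρy Hx Hy : ℤ × ℤ → ℝ)
    (ux vy : ℤ × ℤ → ℝ) (v : ℝ × ℝ) (ω : ℝ) : ℝ :=
  (1 / 2) * (∑ᶠ ij : ℤ × ℤ, (ρx ij * Hx ij * ux ij ^ 2 + ρy ij * Hy ij * vy ij ^ 2) * h ^ 2)
    + (1 / 2) * m * (v.1 ^ 2 + v.2 ^ 2) + (1 / 2) * I * ω ^ 2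

/-!
Write `C p = (ρ⁻¹Gp, m⁻¹Σ(pGH)h², 𝕀⁻¹Σ(pJ^h)h²)` for the pressure correction and
`R(U,v,ω) = −D(HU) + v·GH + ω·J^h` for the constraint residual. Summation by parts (`G` and `D` are
negative adjoints) shows that `C` and `R` are adjoint: `2⟨X, C p⟩_E = h² Σ p R X` for every state
`X`, while `L^h = R ∘ C`. So the pressure equation `L^h p = R X*` gives
`⟨X*, C p⟩_E = ⟨C p, C p⟩_E`, and the Pythagorean relation `E(X*) = E(X* − C p) + E(C p)` follows.
-/

open Function

theorem finsum_mul_sub_symm_div {α : Type*} (e : α ≃ α) (h : ℝ) {a : α → ℝ} (b : α → ℝ)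
    (ha : (support a).Finite) :
    ∑ᶠ i, a i * ((b i - b (e.symm i)) / h) = -∑ᶠ i, (a (e i) - a i) / h * b i := by
  have hae : HasFiniteSupport fun i => a (e i) :=
    HasFiniteSupport.fun_comp_of_injective e.injective ha
  have hshift : ∑ᶠ i, a i * b (e.symm i) = ∑ᶠ i, a (e i) * b i := by
    rw [← finsum_comp_equiv e]; simp
  have hparts : ∑ᶠ i, a i * (b i - b (e.symm i)) = -∑ᶠ i, (a (e i) - a i) * b i := by
    simp only [mul_sub, sub_mul]
    rw [finsum_sub_distrib (HasFiniteSupport.fun_mul_left ha _)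
        (HasFiniteSupport.fun_mul_left ha _),
      finsum_sub_distrib (hae.fun_mul_left _) (HasFiniteSupport.fun_mul_left ha _), hshift]
    ring
  have hdiv : ∀ f : α → ℝ, ∑ᶠ i, f i / h = (∑ᶠ i, f i) / h := fun f => by
    simp only [div_eq_mul_inv, finsum_mul]
  calc ∑ᶠ i, a i * ((b i - b (e.symm i)) / h) = (∑ᶠ i, a i * (b i - b (e.symm i))) / h := by
        simp only [← hdiv, mul_div_assoc]
    _ = -∑ᶠ i, (a (e i) - a i) / h * b i := by
        simp only [hparts, neg_div, ← hdiv, div_mul_eq_mul_div]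

theorem finsum_mul_eq_sum_toFinset {α : Type*} {p : α → ℝ} (hp : (support p).Finite)
    (f : α → ℝ) : ∑ᶠ i, p i * f i = ∑ i ∈ hp.toFinset, p i * f i :=
  finsum_eq_sum_of_support_subset _ <| by
    rw [Set.Finite.coe_toFinset]; exact support_mul_subset_left p f

noncomputable def gradX (h : ℝ) (p : ℤ × ℤ → ℝ) (ij : ℤ × ℤ) : ℝ :=
  (p (ij.1 + 1, ij.2) - p ij) / h

noncomputable def gradY (h : ℝ) (p : ℤ × ℤ → ℝ) (ij : ℤ × ℤ) : ℝ :=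
  (p (ij.1, ij.2 + 1) - p ij) / h

theorem finsum_gradX_mul (h : ℝ) {p : ℤ × ℤ → ℝ} (hp : (support p).Finite) (w : ℤ × ℤ → ℝ) :
    ∑ᶠ ij, gradX h p ij * w ij = -∑ᶠ ij, p ij * ((w ij - w (ij.1 - 1, ij.2)) / h) :=
  (neg_eq_iff_eq_neg.mpr <|
    finsum_mul_sub_symm_div ((Equiv.addRight 1).prodCongr (Equiv.refl ℤ)) h w hp).symm

theorem finsum_gradY_mul (h : ℝ) {p : ℤ × ℤ → ℝ} (hp : (support p).Finite) (w : ℤ × ℤ → ℝ) :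
    ∑ᶠ ij, gradY h p ij * w ij = -∑ᶠ ij, p ij * ((w ij - w (ij.1, ij.2 - 1)) / h) :=
  (neg_eq_iff_eq_neg.mpr <|
    finsum_mul_sub_symm_div ((Equiv.refl ℤ).prodCongr (Equiv.addRight 1)) h w hp).symm

noncomputable def constraintResidual (h : ℝ) (Hx Hy Jh ux vy : ℤ × ℤ → ℝ) (v : ℝ × ℝ) (ω : ℝ)
    (ij : ℤ × ℤ) : ℝ :=
  -((Hx ij * ux ij - Hx (ij.1 - 1, ij.2) * ux (ij.1 - 1, ij.2)) / h
      + (Hy ij * vy ij - Hy (ij.1, ij.2 - 1) * vy (ij.1, ij.2 - 1)) / h)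
    + (v.1 * GHx h Hx ij + v.2 * GHy h Hy ij) + ω * Jh ij

noncomputable def fluidCorrectionX (h : ℝ) (ρx p : ℤ × ℤ → ℝ) (ij : ℤ × ℤ) : ℝ :=
  1 / ρx ij * gradX h p ij

noncomputable def fluidCorrectionY (h : ℝ) (ρy p : ℤ × ℤ → ℝ) (ij : ℤ × ℤ) : ℝ :=
  1 / ρy ij * gradY h p ij

noncomputable def bodyVelocityCorrection (h m : ℝ) (Hx Hy p : ℤ × ℤ → ℝ) : ℝ × ℝ :=
  (1 / m * ((∑ᶠ ij, p ij * GHx h Hx ij) * h ^ 2), 1 / m * ((∑ᶠ ij, p ij * GHy h Hy ij) * h ^ 2))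

noncomputable def bodyAngularCorrection (h I : ℝ) (Jh p : ℤ × ℤ → ℝ) : ℝ :=
  1 / I * ((∑ᶠ ij, p ij * Jh ij) * h ^ 2)

theorem Lh_eq_constraintResidual (h m I : ℝ) (ρx ρy Hx Hy Jh p : ℤ × ℤ → ℝ) (ij : ℤ × ℤ) :
    Lh h m I ρx ρy Hx Hy Jh p ij
      = constraintResidual h Hx Hy Jh (fluidCorrectionX h ρx p) (fluidCorrectionY h ρy p)
          (bodyVelocityCorrection h m Hx Hy p) (bodyAngularCorrection h I Jh p) ij := by
  simp only [Lh, constraintResidual, fluidCorrectionX, fluidCorrectionY, gradX, gradY,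
    bodyVelocityCorrection, bodyAngularCorrection, sub_add_cancel]
  ring

section Energy

variable (h m I : ℝ) (ρx ρy Hx Hy : ℤ × ℤ → ℝ)

noncomputable def energyInner (ux vy : ℤ × ℤ → ℝ) (v : ℝ × ℝ) (ω : ℝ)
    (ux' vy' : ℤ × ℤ → ℝ) (v' : ℝ × ℝ) (ω' : ℝ) : ℝ :=
  (1 / 2) * (∑ᶠ ij, (ρx ij * Hx ij * (ux ij * ux' ij) + ρy ij * Hy ij * (vy ij * vy' ij)) * h ^ 2)
    + (1 / 2) * m * (v.1 * v'.1 + v.2 * v'.2) + (1 / 2) * I * (ω * ω')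

theorem Eh_eq_energyInner (ux vy : ℤ × ℤ → ℝ) (v : ℝ × ℝ) (ω : ℝ) :
    Eh h m I ρx ρy Hx Hy ux vy v ω = energyInner h m I ρx ρy Hx Hy ux vy v ω ux vy v ω := by
  simp only [Eh, energyInner, sq]

theorem Eh_nonneg (hm : 0 ≤ m) (hI : 0 ≤ I) (hρx : ∀ ij, 0 ≤ ρx ij) (hρy : ∀ ij, 0 ≤ ρy ij)
    (hHx : ∀ ij, 0 ≤ Hx ij) (hHy : ∀ ij, 0 ≤ Hy ij)
    (ux vy : ℤ × ℤ → ℝ) (v : ℝ × ℝ) (ω : ℝ) : 0 ≤ Eh h m I ρx ρy Hx Hy ux vy v ω := by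
  have hsum : 0 ≤ ∑ᶠ ij, (ρx ij * Hx ij * ux ij ^ 2 + ρy ij * Hy ij * vy ij ^ 2) * h ^ 2 :=
    finsum_nonneg fun ij => by
      have := hρx ij; have := hρy ij; have := hHx ij; have := hHy ij; positivity
  unfold Eh
  positivity

variable {Hx Hy}

theorem finsum_energy_eq_sum_union_support (hHx : (support Hx).Finite)
    (hHy : (support Hy).Finite) (f g : ℤ × ℤ → ℝ) :
    ∑ᶠ ij, (ρx ij * Hx ij * f ij + ρy ij * Hy ij * g ij) * h ^ 2
      = ∑ ij ∈ (hHx.union hHy).toFinset,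
          (ρx ij * Hx ij * f ij + ρy ij * Hy ij * g ij) * h ^ 2 := by
  refine finsum_eq_sum_of_support_subset _ fun ij hij => ?_
  contrapose! hij
  simp only [Set.Finite.coe_toFinset, Set.mem_union, mem_support, not_or, not_not] at hij
  simp [hij.1, hij.2]

theorem Eh_sub (hHx : (support Hx).Finite) (hHy : (support Hy).Finite)
    (ux vy : ℤ × ℤ → ℝ) (v : ℝ × ℝ) (ω : ℝ) (ux' vy' : ℤ × ℤ → ℝ) (v' : ℝ × ℝ) (ω' : ℝ) :
    Eh h m I ρx ρy Hx Hy (fun ij => ux ij - ux' ij) (fun ij => vy ij - vy' ij)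
        (v.1 - v'.1, v.2 - v'.2) (ω - ω')
      = Eh h m I ρx ρy Hx Hy ux vy v ω
        - 2 * energyInner h m I ρx ρy Hx Hy ux vy v ω ux' vy' v' ω'
        + Eh h m I ρx ρy Hx Hy ux' vy' v' ω' := by
  simp only [Eh, energyInner, finsum_energy_eq_sum_union_support h ρx ρy hHx hHy]
  have hsum := Finset.sum_congr rfl fun ij (_ : ij ∈ (hHx.union hHy).toFinset) =>
    show (ρx ij * Hx ij * (ux ij - ux' ij) ^ 2 + ρy ij * Hy ij * (vy ij - vy' ij) ^ 2) * h ^ 2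
      = (ρx ij * Hx ij * ux ij ^ 2 + ρy ij * Hy ij * vy ij ^ 2) * h ^ 2
        - 2 * ((ρx ij * Hx ij * (ux ij * ux' ij) + ρy ij * Hy ij * (vy ij * vy' ij)) * h ^ 2)
        + (ρx ij * Hx ij * ux' ij ^ 2 + ρy ij * Hy ij * vy' ij ^ 2) * h ^ 2 by ring
  rw [Finset.sum_add_distrib, Finset.sum_sub_distrib, ← Finset.mul_sum] at hsum
  rw [hsum]
  ring

variable {m I ρx ρy}

theorem two_mul_energyInner_correction (hHx : (support Hx).Finite)
    (hHy : (support Hy).Finite) (hm : m ≠ 0) (hI : I ≠ 0)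
    (hρx : ∀ ij, ρx ij ≠ 0) (hρy : ∀ ij, ρy ij ≠ 0) (Jh : ℤ × ℤ → ℝ)
    {p : ℤ × ℤ → ℝ} (hp : (support p).Finite) (ux vy : ℤ × ℤ → ℝ) (v : ℝ × ℝ) (ω : ℝ) :
    2 * energyInner h m I ρx ρy Hx Hy ux vy v ω (fluidCorrectionX h ρx p)
        (fluidCorrectionY h ρy p) (bodyVelocityCorrection h m Hx Hy p)
        (bodyAngularCorrection h I Jh p)
      = h ^ 2 * ∑ᶠ ij, p ij * constraintResidual h Hx Hy Jh ux vy v ω ij := by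
  have hfluid : ∑ᶠ ij, (ρx ij * Hx ij * (ux ij * fluidCorrectionX h ρx p ij)
        + ρy ij * Hy ij * (vy ij * fluidCorrectionY h ρy p ij)) * h ^ 2
      = h ^ 2 * (∑ᶠ ij, gradX h p ij * (Hx ij * ux ij)
          + ∑ᶠ ij, gradY h p ij * (Hy ij * vy ij)) := by
    rw [← finsum_add_distrib (.fun_mul_right _ (.fun_mul_left hHx _))
      (.fun_mul_right _ (.fun_mul_left hHy _)), mul_finsum]
    refine finsum_congr fun ij => ?_
    simp only [fluidCorrectionX, fluidCorrectionY]
    field_simp [hρx ij, hρy ij]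
  have hres : ∑ᶠ ij, p ij * constraintResidual h Hx Hy Jh ux vy v ω ij
      = -∑ᶠ ij, p ij * ((Hx ij * ux ij - Hx (ij.1 - 1, ij.2) * ux (ij.1 - 1, ij.2)) / h)
        - ∑ᶠ ij, p ij * ((Hy ij * vy ij - Hy (ij.1, ij.2 - 1) * vy (ij.1, ij.2 - 1)) / h)
        + v.1 * ∑ᶠ ij, p ij * GHx h Hx ij + v.2 * ∑ᶠ ij, p ij * GHy h Hy ij
        + ω * ∑ᶠ ij, p ij * Jh ij := by
    simp only [finsum_mul_eq_sum_toFinset hp, Finset.mul_sum, ← Finset.sum_neg_distrib,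
      ← Finset.sum_sub_distrib, ← Finset.sum_add_distrib]
    refine Finset.sum_congr rfl fun ij _ => ?_
    simp only [constraintResidual]
    ring
  rw [energyInner, hfluid, hres, finsum_gradX_mul h hp, finsum_gradY_mul h hp,
    bodyVelocityCorrection, bodyAngularCorrection]
  field_simp
  ring

end Energy

theorem discrete_energy_stability_general
    (h m I : ℝ) (hm : 0 < m) (hI : 0 < I)
    (ρx ρy : ℤ × ℤ → ℝ) (hρx : ∀ ij, 0 < ρx ij) (hρy : ∀ ij, 0 < ρy ij)
    (Hx Hy : ℤ × ℤ → ℝ)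
    (hHx01 : ∀ ij, Hx ij ∈ Set.Icc (0 : ℝ) 1) (hHy01 : ∀ ij, Hy ij ∈ Set.Icc (0 : ℝ) 1)
    (hHx : (Function.support Hx).Finite) (hHy : (Function.support Hy).Finite)
    (Jh : ℤ × ℤ → ℝ)
    (uxs vys : ℤ × ℤ → ℝ)
    (vs : ℝ × ℝ) (ωs : ℝ)
    (p : ℤ × ℤ → ℝ) (hp : (Function.support p).Finite)
    -- p solves L^h p = −D(H U*) + v*·GH + ω*·J^h
    (hsol : ∀ ij : ℤ × ℤ, Lh h m I ρx ρy Hx Hy Jh p ij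
      = -((Hx ij * uxs ij - Hx (ij.1 - 1, ij.2) * uxs (ij.1 - 1, ij.2)) / h
          + (Hy ij * vys ij - Hy (ij.1, ij.2 - 1) * vys (ij.1, ij.2 - 1)) / h)
        + (vs.1 * GHx h Hx ij + vs.2 * GHy h Hy ij) + ωs * Jh ij) :
    Eh h m I ρx ρy Hx Hy uxs vys vs ωs
      ≥ Eh h m I ρx ρy Hx Hy
          (fun ij => uxs ij - (1 / ρx ij) * ((p (ij.1 + 1, ij.2) - p ij) / h))
          (fun ij => vys ij - (1 / ρy ij) * ((p (ij.1, ij.2 + 1) - p ij) / h))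
          (vs.1 - (1 / m) * ((∑ᶠ ij : ℤ × ℤ, p ij * GHx h Hx ij) * h ^ 2),
            vs.2 - (1 / m) * ((∑ᶠ ij : ℤ × ℤ, p ij * GHy h Hy ij) * h ^ 2))
          (ωs - (1 / I) * ((∑ᶠ ij : ℤ × ℤ, p ij * Jh ij) * h ^ 2)) := by
  have hpair := two_mul_energyInner_correction h hHx hHy hm.ne' hI.ne' (fun ij => (hρx ij).ne')
    (fun ij => (hρy ij).ne') Jh hp
  have hres : ∀ ij, constraintResidual h Hx Hy Jh uxs vys vs ωs ij
      = Lh h m I ρx ρy Hx Hy Jh p ij := fun ij => (hsol ij).symm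
  -- `hpair` at the correction itself turns `h² Σ p L^h p` back into twice its energy
  have horth := hpair uxs vys vs ωs
  simp only [hres, Lh_eq_constraintResidual, ← hpair, ← Eh_eq_energyInner] at horth
  have hcorr := Eh_nonneg h m I ρx ρy Hx Hy hm.le hI.le (fun ij => (hρx ij).le)
    (fun ij => (hρy ij).le) (fun ij => (hHx01 ij).1) (fun ij => (hHy01 ij).1)
    (fluidCorrectionX h ρx p) (fluidCorrectionY h ρy p) (bodyVelocityCorrection h m Hx Hy p)
    (bodyAngularCorrection h I Jh p)
  refine (Eh_sub h m I ρx ρy hHx hHy uxs vys vs ωs (fluidCorrectionX h ρx p)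
    (fluidCorrectionY h ρy p) (bodyVelocityCorrection h m Hx Hy p)
    (bodyAngularCorrection h I Jh p)).trans_le ?_
  linarith

/-- (Discrete energy stability.)  If
`(U,v,ω) = (U*,v*,ω*) − (ρ⁻¹Gp, m⁻¹Σ(pGH)h², 𝕀⁻¹Σ(pJ^h)h²)` where `p` solves
`L^h p = −D(HU*) + v*·GH + ω*·J^h`, then `E_h(U*,v*,ω*) ≥ E_h(U,v,ω)`. -/
theorem discrete_energy_stability
    (h m I : ℝ) (hh : 0 < h) (hm : 0 < m) (hI : 0 < I)
    (ρx ρy : ℤ × ℤ → ℝ) (hρx : ∀ ij, 0 < ρx ij) (hρy : ∀ ij, 0 < ρy ij)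
    (Hx Hy : ℤ × ℤ → ℝ)
    (hHx01 : ∀ ij, Hx ij ∈ Set.Icc (0 : ℝ) 1) (hHy01 : ∀ ij, Hy ij ∈ Set.Icc (0 : ℝ) 1)
    (hHx : (Function.support Hx).Finite) (hHy : (Function.support Hy).Finite)
    (Jh : ℤ × ℤ → ℝ) (hJh : (Function.support Jh).Finite)
    (uxs vys : ℤ × ℤ → ℝ)
    (huxs : (Function.support uxs).Finite) (hvys : (Function.support vys).Finite)
    (vs : ℝ × ℝ) (ωs : ℝ)
    (p : ℤ × ℤ → ℝ) (hp : (Function.support p).Finite)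
    -- p solves L^h p = −D(H U*) + v*·GH + ω*·J^h
    (hsol : ∀ ij : ℤ × ℤ, Lh h m I ρx ρy Hx Hy Jh p ij
      = -((Hx ij * uxs ij - Hx (ij.1 - 1, ij.2) * uxs (ij.1 - 1, ij.2)) / h
          + (Hy ij * vys ij - Hy (ij.1, ij.2 - 1) * vys (ij.1, ij.2 - 1)) / h)
        + (vs.1 * GHx h Hx ij + vs.2 * GHy h Hy ij) + ωs * Jh ij) :
    Eh h m I ρx ρy Hx Hy uxs vys vs ωs
      ≥ Eh h m I ρx ρy Hx Hy
          (fun ij => uxs ij - (1 / ρx ij) * ((p (ij.1 + 1, ij.2) - p ij) / h))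
          (fun ij => vys ij - (1 / ρy ij) * ((p (ij.1, ij.2 + 1) - p ij) / h))
          (vs.1 - (1 / m) * ((∑ᶠ ij : ℤ × ℤ, p ij * GHx h Hx ij) * h ^ 2),
            vs.2 - (1 / m) * ((∑ᶠ ij : ℤ × ℤ, p ij * GHy h Hy ij) * h ^ 2))
          (ωs - (1 / I) * ((∑ᶠ ij : ℤ × ℤ, p ij * Jh ij) * h ^ 2)) :=
  discrete_energy_stability_general h m I hm hI ρx ρy hρx hρy Hx Hy hHx01 hHy01 hHx hHy Jh uxs vys
    vs ωs p hp hsol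
end
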